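/- arXiv:math/0008209 — 2 statements merged into one kernel-verified Lean document; each statement's English description precedes it below -/
import Mathlib

section
/- The fraction of perfect matchings of K_{2n} (vertex set Z/2n) that are fixed by some nontrivial rotation tends to 0 as n → ∞. -/
open Nat Finset

/-- A perfect matching of the complete graph on vertex set `ZMod (2n)`: a set of
2-element edges such that every vertex lies on exactly one edge. -/
def PMatching (n : ℕ) :=
  {M : Finset (Finset (ZMod (2 * n))) //
    (∀ e ∈ M, e.card = 2) ∧ ∀ v : ZMod (2 * n), ∃! e, e ∈ M ∧ v ∈ e}

/-- Two perfect matchings are rotation-equivalent if some rotation `v ↦ v + a`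
carries the one to the other. -/
def rotRel (n : ℕ) (M M' : PMatching n) : Prop :=
  ∃ a : ZMod (2 * n), M'.1 = M.1.image (Finset.image (fun v => v + a))

/-- The number of equivalence classes (orbits) of perfect matchings of `K_{2n}` under
the rotation action of the cyclic group `C_{2n}`. -/
noncomputable def rotOrbitCount (n : ℕ) : ℕ :=
  Set.ncard {S : Set (PMatching n) | ∃ m, S = {m' | rotRel n m m'}}

namespace RotAux

variable {n : ℕ}

/-- the fixedness predicate -/
def Fixed (a : ZMod (2 * n)) (M : PMatching n) : Prop :=
  M.1.image (Finset.image (fun v => v + a)) = M.1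

lemma exists_partner (M : PMatching n) (v : ZMod (2 * n)) :
    ∃ w, w ≠ v ∧ {v, w} ∈ M.1 := by
  obtain ⟨e, ⟨heM, hve⟩, -⟩ := M.2.2 v
  obtain ⟨x, y, hxy, rfl⟩ := Finset.card_eq_two.mp (M.2.1 e heM)
  rcases Finset.mem_insert.mp hve with rfl | hv
  · exact ⟨y, fun h => hxy h.symm, heM⟩
  · rw [Finset.mem_singleton] at hv
    subst hv
    exact ⟨x, hxy, by rwa [Finset.pair_comm]⟩

noncomputable def pf (M : PMatching n) (v : ZMod (2 * n)) : ZMod (2 * n) :=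
  (exists_partner M v).choose

lemma pf_ne (M : PMatching n) (v : ZMod (2 * n)) : pf M v ≠ v :=
  (exists_partner M v).choose_spec.1

lemma pf_pair_mem (M : PMatching n) (v : ZMod (2 * n)) : {v, pf M v} ∈ M.1 :=
  (exists_partner M v).choose_spec.2

lemma edge_eq (M : PMatching n) {e : Finset (ZMod (2 * n))} (he : e ∈ M.1)
    {v : ZMod (2 * n)} (hv : v ∈ e) : e = {v, pf M v} := by
  obtain ⟨e', -, hu⟩ := M.2.2 v
  rw [hu e ⟨he, hv⟩, hu {v, pf M v} ⟨pf_pair_mem M v, Finset.mem_insert_self _ _⟩]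

lemma pf_pf (M : PMatching n) (v : ZMod (2 * n)) : pf M (pf M v) = v := by
  have h := edge_eq M (pf_pair_mem M v)
    (show pf M v ∈ ({v, pf M v} : Finset _) from
      Finset.mem_insert.mpr (Or.inr (Finset.mem_singleton_self _)))
  have hv : v ∈ ({pf M v, pf M (pf M v)} : Finset _) := h ▸ Finset.mem_insert_self v _
  rcases Finset.mem_insert.mp hv with h' | h'
  · exact absurd h'.symm (pf_ne M v)
  · exact (Finset.mem_singleton.mp h').symm

lemma mem_iff_pf (M : PMatching n) (e : Finset (ZMod (2 * n))) :
    e ∈ M.1 ↔ ∃ v, e = {v, pf M v} := by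
  constructor
  · intro he
    have h2 := M.2.1 e he
    have : e.Nonempty := Finset.card_pos.mp (by omega)
    obtain ⟨v, hv⟩ := this
    exact ⟨v, edge_eq M he hv⟩
  · rintro ⟨v, rfl⟩
    exact pf_pair_mem M v

lemma pf_add {a : ZMod (2 * n)} {M : PMatching n} (hM : Fixed a M) (v : ZMod (2 * n)) :
    pf M (v + a) = pf M v + a := by
  have h1 : Finset.image (fun x => x + a) {v, pf M v} ∈ M.1 := by
    rw [← hM]
    exact Finset.mem_image_of_mem _ (pf_pair_mem M v)
  rw [Finset.image_insert, Finset.image_singleton] at h1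
  have h2 := edge_eq M h1 (Finset.mem_insert_self _ _)
  have h3 : pf M v + a ∈ ({v + a, pf M (v + a)} : Finset _) := by
    rw [← h2]; exact Finset.mem_insert.mpr (Or.inr (Finset.mem_singleton_self _))
  rcases Finset.mem_insert.mp h3 with h | h
  · exact absurd (add_right_cancel h) (pf_ne M v)
  · exact (Finset.mem_singleton.mp h).symm

lemma pf_add_nsmul {a : ZMod (2 * n)} {M : PMatching n} (hM : Fixed a M)
    (v : ZMod (2 * n)) (k : ℕ) : pf M (v + k • a) = pf M v + k • a := by
  induction k with
  | zero => simp
  | succ k ih =>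
    have := pf_add hM (v + k • a)
    rw [succ_nsmul, ← add_assoc, this, ih, add_assoc]

lemma pf_add_zsmul {a : ZMod (2 * n)} {M : PMatching n} (hM : Fixed a M)
    (v : ZMod (2 * n)) (z : ℤ) : pf M (v + z • a) = pf M v + z • a := by
  obtain ⟨k, rfl | rfl⟩ := z.eq_nat_or_neg
  · rw [natCast_zsmul]; exact pf_add_nsmul hM v k
  · have h := pf_add_nsmul hM (v + (-(k : ℤ)) • a) k
    have e : v + (-(k : ℤ)) • a + (k : ℕ) • a = v := by
      rw [add_assoc, ← natCast_zsmul, ← add_zsmul]; simp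
    rw [e] at h
    rw [h, ← natCast_zsmul, add_assoc, ← add_zsmul]
    simp




/-- gcd of `a.val` with `2n` -/
def mg (a : ZMod (2 * n)) : ℕ := Nat.gcd (ZMod.val a) (2 * n)

section
variable [NeZero (2 * n)]

lemma mg_pos (a : ZMod (2 * n)) : 0 < mg a :=
  Nat.gcd_pos_of_pos_right _ (Nat.pos_of_ne_zero (NeZero.ne _))

lemma mg_dvd (a : ZMod (2 * n)) : mg a ∣ 2 * n := Nat.gcd_dvd_right _ _

lemma mg_le {a : ZMod (2 * n)} (ha : a ≠ 0) : mg a ≤ n := by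
  have h1 : mg a ∣ ZMod.val a := Nat.gcd_dvd_left _ _
  have h2 : ZMod.val a ≠ 0 := fun h => ha ((ZMod.val_eq_zero a).mp h)
  have h3 : mg a ≤ ZMod.val a := Nat.le_of_dvd (Nat.pos_of_ne_zero h2) h1
  have h4 : ZMod.val a < 2 * n := ZMod.val_lt a
  obtain ⟨k, hk⟩ := mg_dvd a
  have hm := mg_pos a
  have hn2 : 2 * n ≠ 0 := NeZero.ne _
  rcases Nat.lt_or_ge k 2 with hk2 | hk2
  · interval_cases k <;> omega
  · nlinarith

lemma mbar_eq_zsmul (a : ZMod (2 * n)) :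
    ∃ z : ℤ, ((mg a : ℕ) : ZMod (2 * n)) = z • a := by
  refine ⟨Nat.gcdA (ZMod.val a) (2 * n), ?_⟩
  have hb := Nat.gcd_eq_gcd_ab (ZMod.val a) (2 * n)
  have h1 : (((2 * n : ℕ) : ℤ) : ZMod (2 * n)) = 0 := by
    rw [Int.cast_natCast, ZMod.natCast_self]
  have h2 : (((ZMod.val a : ℕ) : ℤ) : ZMod (2 * n)) = a := by
    rw [Int.cast_natCast, ZMod.natCast_zmod_val]
  have h3 : ((mg a : ℕ) : ZMod (2 * n)) = (((mg a : ℕ) : ℤ) : ZMod (2 * n)) :=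
    (Int.cast_natCast _).symm
  rw [h3, mg, hb, Int.cast_add, Int.cast_mul, Int.cast_mul, h1, h2, zero_mul, add_zero,
    zsmul_eq_mul]
  ring

/-- the representative of `w` modulo the subgroup generated by `a` -/
def rp (a w : ZMod (2 * n)) : ℕ := (ZMod.val w) % mg a

lemma rp_lt (a w : ZMod (2 * n)) : rp a w < mg a := Nat.mod_lt _ (mg_pos a)

lemma rp_spec (a w : ZMod (2 * n)) :
    ∃ k : ℤ, w = ((rp a w : ℕ) : ZMod (2 * n)) + k • ((mg a : ℕ) : ZMod (2 * n)) := by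
  refine ⟨((ZMod.val w / mg a : ℕ) : ℤ), ?_⟩
  have h := Nat.div_add_mod (ZMod.val w) (mg a)
  have hv : ((ZMod.val w : ℕ) : ZMod (2 * n)) = w := ZMod.natCast_zmod_val w
  have key : ((mg a * (ZMod.val w / mg a) + ZMod.val w % mg a : ℕ) : ZMod (2 * n)) = w := by
    rw [h]; exact hv
  conv_lhs => rw [← key]
  unfold rp
  rw [zsmul_eq_mul, Nat.cast_add, Nat.cast_mul, Int.cast_natCast]
  ring

lemma rp_unique {a : ZMod (2 * n)} {r : ℕ} (hr : r < mg a) {w : ZMod (2 * n)}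
    (h : ∃ k : ℤ, w = (r : ZMod (2 * n)) + k • ((mg a : ℕ) : ZMod (2 * n))) :
    rp a w = r := by
  obtain ⟨k, hk⟩ := h
  obtain ⟨k', hk'⟩ := rp_spec a w
  rw [zsmul_eq_mul] at hk hk'
  have he : (((rp a w : ℤ) + k' * mg a - r - k * mg a : ℤ) : ZMod (2 * n)) = 0 := by
    push_cast
    linear_combination hk - hk'
  rw [ZMod.intCast_zmod_eq_zero_iff_dvd] at he
  have hd : (mg a : ℤ) ∣ ((rp a w : ℤ) - r) := by
    have h2 : (mg a : ℤ) ∣ (2 * n : ℕ) := Int.natCast_dvd_natCast.mpr (mg_dvd a)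
    have h3 : (mg a : ℤ) ∣ ((rp a w : ℤ) + k' * mg a - r - k * mg a) := dvd_trans h2 he
    have h4 : (rp a w : ℤ) - r = ((rp a w : ℤ) + k' * mg a - r - k * mg a) + (k - k') * mg a := by ring
    rw [h4]
    exact dvd_add h3 ⟨k - k', by ring⟩
  have h5 : ((rp a w : ℤ) - r) = 0 := by
    refine Int.eq_zero_of_abs_lt_dvd hd ?_
    have := rp_lt a w
    rw [abs_lt]
    omega
  omega

lemma rp_natCast {a : ZMod (2 * n)} {i : ℕ} (hi : i < mg a) :
    rp a ((i : ℕ) : ZMod (2 * n)) = i :=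
  rp_unique hi ⟨0, by simp⟩

lemma rp_shift (a w : ZMod (2 * n)) (k : ℤ) :
    rp a (w + k • ((mg a : ℕ) : ZMod (2 * n))) = rp a w := by
  obtain ⟨k', hk'⟩ := rp_spec a w
  refine rp_unique (rp_lt a w) ⟨k' + k, ?_⟩
  conv_lhs => rw [hk']
  rw [add_zsmul]
  ring

lemma eq_add_mul_of_rp_eq {a v w : ZMod (2 * n)} (h : rp a v = rp a w) :
    ∃ k : ℤ, w = v + k • ((mg a : ℕ) : ZMod (2 * n)) := by
  obtain ⟨k1, h1⟩ := rp_spec a v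
  obtain ⟨k2, h2⟩ := rp_spec a w
  refine ⟨k2 - k1, ?_⟩
  rw [h1, h2, h, sub_zsmul]
  ring

lemma self_add_eq_zero {x : ZMod (2 * n)} (h : x + x = 0) :
    x = 0 ∨ x = ((n : ℕ) : ZMod (2 * n)) := by
  have hn : 0 < n := by
    have := NeZero.ne (2 * n); omega
  have hv : ((ZMod.val x : ℕ) : ZMod (2 * n)) = x := ZMod.natCast_zmod_val x
  have h2 : ((2 * ZMod.val x : ℕ) : ZMod (2 * n)) = 0 := by
    push_cast
    rw [hv]
    linear_combination h
  rw [ZMod.natCast_eq_zero_iff] at h2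
  have h3 : n ∣ ZMod.val x := by
    obtain ⟨c, hc⟩ := h2
    refine ⟨c, ?_⟩
    have h' : 2 * ZMod.val x = 2 * (n * c) := by rw [hc]; ring
    exact Nat.eq_of_mul_eq_mul_left (by norm_num) h'
  have h4 : ZMod.val x < 2 * n := ZMod.val_lt x
  obtain ⟨c, hc⟩ := h3
  have hval : ZMod.val x = 0 ∨ ZMod.val x = n := by
    rcases Nat.lt_or_ge c 2 with h' | h'
    · interval_cases c <;> omega
    · exfalso; nlinarith
  rcases hval with h' | h'
  · left; exact (ZMod.val_eq_zero x).mp h'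
  · right; exact hv.symm.trans (by rw [h'])

end

section
variable [NeZero (2 * n)]

lemma pf_shift {a : ZMod (2 * n)} {M : PMatching n} (hM : Fixed a M)
    (v : ZMod (2 * n)) (k : ℤ) :
    pf M (v + k • ((mg a : ℕ) : ZMod (2 * n))) = pf M v + k • ((mg a : ℕ) : ZMod (2 * n)) := by
  obtain ⟨z, hz⟩ := mbar_eq_zsmul a
  rw [hz, smul_smul]
  exact pf_add_zsmul hM v (k * z)

/-- indices where the encoding stores a value -/
def good (a : ZMod (2 * n)) (M : PMatching n) (i : ℕ) : Prop :=
  i < mg a ∧ ¬(rp a (pf M ((i : ℕ) : ZMod (2 * n))) < i ∨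
    pf M ((i : ℕ) : ZMod (2 * n)) = ((i : ℕ) : ZMod (2 * n)) + ((n : ℕ) : ZMod (2 * n)))

open Classical in
noncomputable def enc1 (a : ZMod (2 * n)) (M : PMatching n) : Fin n → Option (ZMod (2 * n)) :=
  fun i => if good a M (i : ℕ) then some (pf M ((i : ℕ) : ZMod (2 * n))) else none

lemma enc1_pos {a : ZMod (2 * n)} {M : PMatching n} {i : Fin n} (h : good a M (i : ℕ)) :
    enc1 a M i = some (pf M ((i : ℕ) : ZMod (2 * n))) := by
  simp only [enc1, if_pos h]

lemma enc1_neg {a : ZMod (2 * n)} {M : PMatching n} {i : Fin n} (h : ¬ good a M (i : ℕ)) :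
    enc1 a M i = none := by
  simp only [enc1, if_neg h]

lemma pf_eq_of_rp_lt {a : ZMod (2 * n)} {M₁ M₂ : PMatching n}
    (hM1 : Fixed a M₁) (hM2 : Fixed a M₂) {i : ℕ}
    (IH : ∀ j, j < i → pf M₁ ((j : ℕ) : ZMod (2 * n)) = pf M₂ ((j : ℕ) : ZMod (2 * n)))
    (hlt : rp a (pf M₁ ((i : ℕ) : ZMod (2 * n))) < i) :
    pf M₂ ((i : ℕ) : ZMod (2 * n)) = pf M₁ ((i : ℕ) : ZMod (2 * n)) := by
  obtain ⟨k, hk⟩ := rp_spec a (pf M₁ ((i : ℕ) : ZMod (2 * n)))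
  have e : ((rp a (pf M₁ ((i : ℕ) : ZMod (2 * n))) : ℕ) : ZMod (2 * n)) =
      pf M₁ ((i : ℕ) : ZMod (2 * n)) + (-k) • ((mg a : ℕ) : ZMod (2 * n)) := by
    rw [neg_zsmul]
    conv_rhs => rw [hk]
    ring
  have h1 : pf M₁ ((rp a (pf M₁ ((i : ℕ) : ZMod (2 * n))) : ℕ) : ZMod (2 * n)) =
      ((i : ℕ) : ZMod (2 * n)) + (-k) • ((mg a : ℕ) : ZMod (2 * n)) := by
    rw [e, pf_shift hM1, pf_pf]
  have h2 : pf M₂ ((rp a (pf M₁ ((i : ℕ) : ZMod (2 * n))) : ℕ) : ZMod (2 * n)) =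
      ((i : ℕ) : ZMod (2 * n)) + (-k) • ((mg a : ℕ) : ZMod (2 * n)) := by
    rw [← IH _ hlt]; exact h1
  have h3 : pf M₂ (((i : ℕ) : ZMod (2 * n)) + (-k) • ((mg a : ℕ) : ZMod (2 * n))) =
      ((rp a (pf M₁ ((i : ℕ) : ZMod (2 * n))) : ℕ) : ZMod (2 * n)) := by
    rw [← h2, pf_pf]
  have h4 : ((i : ℕ) : ZMod (2 * n)) =
      (((i : ℕ) : ZMod (2 * n)) + (-k) • ((mg a : ℕ) : ZMod (2 * n))) +
        k • ((mg a : ℕ) : ZMod (2 * n)) := by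
    rw [add_assoc, ← add_zsmul]; simp
  conv_lhs => rw [h4]
  rw [pf_shift hM2, h3, ← hk]

lemma enc1_injective {a : ZMod (2 * n)} (ha : a ≠ 0) {M₁ M₂ : PMatching n}
    (hM1 : Fixed a M₁) (hM2 : Fixed a M₂) (he : enc1 a M₁ = enc1 a M₂) : M₁ = M₂ := by
  have key : ∀ i : ℕ, i < mg a →
      pf M₁ ((i : ℕ) : ZMod (2 * n)) = pf M₂ ((i : ℕ) : ZMod (2 * n)) := by
    intro i
    induction i using Nat.strong_induction_on with
    | _ i IH =>
      intro hi
      have hif : i < n := lt_of_lt_of_le hi (mg_le ha)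
      have hei : enc1 a M₁ ⟨i, hif⟩ = enc1 a M₂ ⟨i, hif⟩ := congrFun he _
      have IH' : ∀ j, j < i → pf M₁ ((j : ℕ) : ZMod (2 * n)) = pf M₂ ((j : ℕ) : ZMod (2 * n)) :=
        fun j hj => IH j hj (lt_trans hj hi)
      by_cases hg1 : good a M₁ i
      · by_cases hg2 : good a M₂ i
        · rw [enc1_pos hg1, enc1_pos hg2] at hei
          exact Option.some.inj hei
        · rw [enc1_pos hg1, enc1_neg hg2] at hei
          exact absurd hei (Option.some_ne_none _)
      · have hd1 : rp a (pf M₁ ((i : ℕ) : ZMod (2 * n))) < i ∨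
            pf M₁ ((i : ℕ) : ZMod (2 * n)) = ((i : ℕ) : ZMod (2 * n)) + ((n : ℕ) : ZMod (2 * n)) := by
          by_contra hcon; exact hg1 ⟨hi, hcon⟩
        by_cases hg2 : good a M₂ i
        · rw [enc1_neg hg1, enc1_pos hg2] at hei
          exact absurd hei.symm (Option.some_ne_none _)
        · have hd2 : rp a (pf M₂ ((i : ℕ) : ZMod (2 * n))) < i ∨
              pf M₂ ((i : ℕ) : ZMod (2 * n)) = ((i : ℕ) : ZMod (2 * n)) + ((n : ℕ) : ZMod (2 * n)) := by
            by_contra hcon; exact hg2 ⟨hi, hcon⟩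
          rcases hd1 with hlt | heq1
          · exact (pf_eq_of_rp_lt hM1 hM2 IH' hlt).symm
          · rcases hd2 with hlt | heq2
            · exact pf_eq_of_rp_lt hM2 hM1 (fun j hj => (IH' j hj).symm) hlt
            · rw [heq1, heq2]
  have key2 : ∀ v : ZMod (2 * n), pf M₁ v = pf M₂ v := by
    intro v
    obtain ⟨k, hk⟩ := rp_spec a v
    conv_lhs => rw [hk]
    conv_rhs => rw [hk]
    rw [pf_shift hM1, pf_shift hM2, key _ (rp_lt a v)]
  apply Subtype.ext
  ext e
  rw [mem_iff_pf, mem_iff_pf]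
  constructor
  · rintro ⟨v, rfl⟩; exact ⟨v, by rw [key2]⟩
  · rintro ⟨v, rfl⟩; exact ⟨v, by rw [key2]⟩

lemma rp_pf_ne_self {a : ZMod (2 * n)} {M : PMatching n} (hM : Fixed a M) {i : ℕ}
    (hi : i < mg a)
    (hne : pf M ((i : ℕ) : ZMod (2 * n)) ≠ ((i : ℕ) : ZMod (2 * n)) + ((n : ℕ) : ZMod (2 * n))) :
    rp a (pf M ((i : ℕ) : ZMod (2 * n))) ≠ i := by
  intro hEq
  have hri : rp a ((i : ℕ) : ZMod (2 * n)) = i := rp_natCast hi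
  obtain ⟨k, hk⟩ := eq_add_mul_of_rp_eq (a := a) (v := ((i : ℕ) : ZMod (2 * n)))
    (w := pf M ((i : ℕ) : ZMod (2 * n))) (hri.trans hEq.symm)
  have h1 : pf M (pf M ((i : ℕ) : ZMod (2 * n))) = ((i : ℕ) : ZMod (2 * n)) := pf_pf M _
  have h2 : pf M (((i : ℕ) : ZMod (2 * n)) + k • ((mg a : ℕ) : ZMod (2 * n))) =
      pf M ((i : ℕ) : ZMod (2 * n)) + k • ((mg a : ℕ) : ZMod (2 * n)) := pf_shift hM _ _
  rw [← hk, h1] at h2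
  -- h2 : ↑i = pf M ↑i + k • ↑mg
  have h3 : k • ((mg a : ℕ) : ZMod (2 * n)) + k • ((mg a : ℕ) : ZMod (2 * n)) = 0 := by
    rw [hk, add_assoc] at h2
    exact left_eq_add.mp h2
  rcases self_add_eq_zero h3 with h0 | hn0
  · rw [h0, add_zero] at hk
    exact pf_ne M _ hk
  · rw [hn0] at hk
    exact hne hk

lemma pf_at_rp {a : ZMod (2 * n)} {M : PMatching n} (hM : Fixed a M) (i : ℕ) (hi : i < mg a) :
    rp a (pf M ((rp a (pf M ((i : ℕ) : ZMod (2 * n))) : ℕ) : ZMod (2 * n))) = i := by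
  obtain ⟨k, hk⟩ := rp_spec a (pf M ((i : ℕ) : ZMod (2 * n)))
  have e : ((rp a (pf M ((i : ℕ) : ZMod (2 * n))) : ℕ) : ZMod (2 * n)) =
      pf M ((i : ℕ) : ZMod (2 * n)) + (-k) • ((mg a : ℕ) : ZMod (2 * n)) := by
    rw [neg_zsmul]
    conv_rhs => rw [hk]
    ring
  rw [e, pf_shift hM, pf_pf, rp_shift, rp_natCast hi]

lemma enc1_support_card {a : ZMod (2 * n)} (ha : a ≠ 0) {M : PMatching n} (hM : Fixed a M) :
    ((Finset.univ : Finset (Fin n)).filter (fun i => (enc1 a M i).isSome)).card ≤ n / 2 := by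
  classical
  have hST : ((Finset.univ : Finset (Fin n)).filter (fun i => (enc1 a M i).isSome)).card +
      ((Finset.univ : Finset (Fin n)).filter (fun i => ¬ (enc1 a M i).isSome)).card = n := by
    rw [Finset.card_filter_add_card_filter_not]
    simp
  have hmain : ((Finset.univ : Finset (Fin n)).filter (fun i => (enc1 a M i).isSome)).card ≤
      ((Finset.univ : Finset (Fin n)).filter (fun i => ¬ (enc1 a M i).isSome)).card := by
    apply Finset.card_le_card_of_injOn
      (fun i : Fin n => (⟨rp a (pf M ((i : ℕ) : ZMod (2 * n))),
        lt_of_lt_of_le (rp_lt a _) (mg_le ha)⟩ : Fin n))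
    · intro i hiS
      rw [Finset.mem_coe, Finset.mem_filter] at hiS
      have hg : good a M (i : ℕ) := by
        by_contra hcon
        rw [enc1_neg hcon] at hiS
        simp at hiS
      obtain ⟨hi, hcon⟩ := hg
      push_neg at hcon
      obtain ⟨hge, hne⟩ := hcon
      have hneq := rp_pf_ne_self hM hi hne
      have hgt : i < rp a (pf M ((i : ℕ) : ZMod (2 * n))) := by omega
      rw [Finset.mem_coe, Finset.mem_filter]
      refine ⟨Finset.mem_univ _, ?_⟩
      have hj : ¬ good a M (rp a (pf M ((i : ℕ) : ZMod (2 * n)))) := by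
        rintro ⟨hjm, hjcon⟩
        exact hjcon (Or.inl (by rw [pf_at_rp hM i hi]; exact hgt))
      rw [enc1_neg hj]
      simp
    · intro i₁ h₁ i₂ h₂ heq
      simp only [Finset.coe_filter, Set.mem_setOf_eq] at h₁ h₂
      have hg₁ : good a M (i₁ : ℕ) := by
        by_contra hcon
        rw [enc1_neg hcon] at h₁
        simp at h₁
      have hg₂ : good a M (i₂ : ℕ) := by
        by_contra hcon
        rw [enc1_neg hcon] at h₂
        simp at h₂
      have e1 := pf_at_rp hM (i₁ : ℕ) hg₁.1
      have e2 := pf_at_rp hM (i₂ : ℕ) hg₂.1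
      have hval : rp a (pf M ((i₁ : ℕ) : ZMod (2 * n))) =
          rp a (pf M ((i₂ : ℕ) : ZMod (2 * n))) := congrArg Fin.val heq
      rw [hval] at e1
      exact Fin.ext (e1.symm.trans e2)
  omega

end

section
variable [NeZero (2 * n)]

def indexer (S : Finset (Fin n)) (k : Fin (n / 2)) : Fin n :=
  if hk : (k : ℕ) < S.card then (S.orderIsoOfFin rfl ⟨(k : ℕ), hk⟩ : {x // x ∈ S}).1
  else ⟨0, by have := NeZero.ne (2 * n); omega⟩

lemma indexer_surj (S : Finset (Fin n)) (hS : S.card ≤ n / 2) {i : Fin n} (hi : i ∈ S) :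
    ∃ k : Fin (n / 2), indexer S k = i := by
  set k0 := (S.orderIsoOfFin rfl).symm ⟨i, hi⟩ with hk0
  refine ⟨⟨(k0 : ℕ), lt_of_lt_of_le k0.isLt hS⟩, ?_⟩
  have hk : ((⟨(k0 : ℕ), lt_of_lt_of_le k0.isLt hS⟩ : Fin (n / 2)) : ℕ) < S.card := k0.isLt
  simp only [indexer]
  rw [dif_pos hk]
  have h2 : (⟨((⟨(k0 : ℕ), lt_of_lt_of_le k0.isLt hS⟩ : Fin (n / 2)) : ℕ), hk⟩ : Fin S.card)
      = k0 := Fin.ext rfl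
  rw [h2, hk0, OrderIso.apply_symm_apply]

noncomputable def enc2 (a : ZMod (2 * n)) (M : PMatching n) :
    Finset (Fin n) × (Fin (n / 2) → ZMod (2 * n)) :=
  (Finset.univ.filter (fun i => (enc1 a M i).isSome),
    fun k => (enc1 a M
      (indexer (Finset.univ.filter (fun i => (enc1 a M i).isSome)) k)).getD 0)

lemma enc2_injective {a : ZMod (2 * n)} (ha : a ≠ 0) {M₁ M₂ : PMatching n}
    (hM1 : Fixed a M₁) (hM2 : Fixed a M₂) (he : enc2 a M₁ = enc2 a M₂) : M₁ = M₂ := by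
  obtain ⟨h1, h2⟩ := Prod.ext_iff.mp he
  simp only [enc2] at h1 h2
  apply enc1_injective ha hM1 hM2
  funext i
  by_cases hi : (enc1 a M₁ i).isSome
  · have hiS : i ∈ Finset.univ.filter (fun i => (enc1 a M₁ i).isSome) :=
      Finset.mem_filter.mpr ⟨Finset.mem_univ _, hi⟩
    have hc1 : (Finset.univ.filter (fun i => (enc1 a M₁ i).isSome)).card ≤ n / 2 :=
      enc1_support_card ha hM1
    obtain ⟨k, hk⟩ := indexer_surj _ hc1 hiS
    have hv := congrFun h2 k
    rw [← h1, hk] at hv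
    have hi2 : (enc1 a M₂ i).isSome := by
      have : i ∈ Finset.univ.filter (fun i => (enc1 a M₂ i).isSome) := h1 ▸ hiS
      exact (Finset.mem_filter.mp this).2
    obtain ⟨x₁, hx₁⟩ := Option.isSome_iff_exists.mp hi
    obtain ⟨x₂, hx₂⟩ := Option.isSome_iff_exists.mp hi2
    rw [hx₁, hx₂] at hv ⊢
    simp only [Option.getD_some] at hv
    rw [hv]
  · have hi2 : ¬ (enc1 a M₂ i).isSome := by
      intro hcon
      have : i ∈ Finset.univ.filter (fun i => (enc1 a M₂ i).isSome) :=
        Finset.mem_filter.mpr ⟨Finset.mem_univ _, hcon⟩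
      rw [← h1] at this
      exact hi (Finset.mem_filter.mp this).2
    rw [Option.not_isSome_iff_eq_none] at hi hi2
    rw [hi, hi2]

lemma pm_finite : Finite (PMatching n) := by
  unfold PMatching
  infer_instance

lemma card_fixed_le :
    Nat.card {M : PMatching n //
        ∃ a : ZMod (2 * n), a ≠ 0 ∧ M.1.image (Finset.image (fun v => v + a)) = M.1} ≤
      2 * n * (2 ^ n * (2 * n) ^ (n / 2)) := by
  classical
  haveI : Finite (PMatching n) := pm_finite
  have hinj : Function.Injective
      (fun M : {M : PMatching n //
          ∃ a : ZMod (2 * n), a ≠ 0 ∧ M.1.image (Finset.image (fun v => v + a)) = M.1} =>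
        ((M.2.choose, enc2 M.2.choose M.1) :
          ZMod (2 * n) × (Finset (Fin n) × (Fin (n / 2) → ZMod (2 * n))))) := by
    intro M₁ M₂ h
    have h1 : M₁.2.choose = M₂.2.choose := congrArg Prod.fst h
    have h2 := congrArg Prod.snd h
    simp only at h2
    rw [h1] at h2
    have ha : M₂.2.choose ≠ 0 := M₂.2.choose_spec.1
    have hM2 : Fixed M₂.2.choose M₂.1 := M₂.2.choose_spec.2
    have hM1 : Fixed M₂.2.choose M₁.1 := h1 ▸ M₁.2.choose_spec.2
    exact Subtype.ext (enc2_injective ha hM1 hM2 h2)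
  have hle := Nat.card_le_card_of_injective _ hinj
  have hcard : Nat.card (ZMod (2 * n) × (Finset (Fin n) × (Fin (n / 2) → ZMod (2 * n)))) =
      2 * n * (2 ^ n * (2 * n) ^ (n / 2)) := by
    rw [Nat.card_prod, Nat.card_prod]
    rw [Nat.card_eq_fintype_card, Nat.card_eq_fintype_card, Nat.card_eq_fintype_card]
    rw [ZMod.card, Fintype.card_finset, Fintype.card_fun, ZMod.card, Fintype.card_fin,
      Fintype.card_fin]
  rw [hcard] at hle
  exact hle

end

lemma two_mul_le_two_pow {k : ℕ} (h : 4 ≤ k) : 2 * k ≤ 2 ^ k := by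
  induction k with
  | zero => omega
  | succ k ih =>
    rcases Nat.lt_or_ge k 4 with h' | h'
    · have hk : k = 3 := by omega
      subst hk; norm_num
    · have hp := ih h'
      have h1 : 1 ≤ 2 ^ k := Nat.one_le_two_pow
      rw [pow_succ]
      omega

lemma key_ineq {n : ℕ} (hn : 1152921504606846976 ≤ n) :
    2 * n * (2 ^ n * (2 * n) ^ (n / 2)) * 2 ^ n ≤ ∏ j ∈ Finset.range n, (2 * j + 1) := by
  have hA : (2 * n) ^ (n / 2) ≤ 2 ^ n * (2 * (n / 3) + 1) ^ (n / 2) := by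
    calc (2 * n) ^ (n / 2) ≤ (4 * (2 * (n / 3) + 1)) ^ (n / 2) :=
          Nat.pow_le_pow_left (by omega) _
      _ = 4 ^ (n / 2) * (2 * (n / 3) + 1) ^ (n / 2) := mul_pow _ _ _
      _ ≤ 2 ^ n * (2 * (n / 3) + 1) ^ (n / 2) := by
          have h4 : (4 : ℕ) ^ (n / 2) = 2 ^ (2 * (n / 2)) := by
            rw [pow_mul]; norm_num
          rw [h4]
          exact Nat.mul_le_mul_right _ (Nat.pow_le_pow_right (by norm_num) (by omega))
  have h2n : 2 * n ≤ 2 ^ n := two_mul_le_two_pow (by omega)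
  have hB : 2 * n * 2 ^ n * 2 ^ n * 2 ^ n ≤ (2 * (n / 3) + 1) ^ (n / 7) := by
    calc 2 * n * 2 ^ n * 2 ^ n * 2 ^ n ≤ 2 ^ n * 2 ^ n * 2 ^ n * 2 ^ n := by
          exact Nat.mul_le_mul_right _ (Nat.mul_le_mul_right _ (Nat.mul_le_mul_right _ h2n))
      _ = 2 ^ (4 * n) := by ring
      _ ≤ (2 ^ 59) ^ (n / 7) := by
          rw [← pow_mul]
          exact Nat.pow_le_pow_right (by norm_num) (by omega)
      _ ≤ (2 * (n / 3) + 1) ^ (n / 7) := by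
          apply Nat.pow_le_pow_left
          have h59 : (2 : ℕ) ^ 59 = 576460752303423488 := by norm_num
          omega
  calc 2 * n * (2 ^ n * (2 * n) ^ (n / 2)) * 2 ^ n
      ≤ 2 * n * (2 ^ n * (2 ^ n * (2 * (n / 3) + 1) ^ (n / 2))) * 2 ^ n := by
        gcongr
    _ = (2 * (n / 3) + 1) ^ (n / 2) * (2 * n * 2 ^ n * 2 ^ n * 2 ^ n) := by ring
    _ ≤ (2 * (n / 3) + 1) ^ (n / 2) * (2 * (n / 3) + 1) ^ (n / 7) :=
        Nat.mul_le_mul_left _ hB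
    _ ≤ (2 * (n / 3) + 1) ^ (n / 2) * (2 * (n / 3) + 1) ^ (n - n / 3 - n / 2) :=
        Nat.mul_le_mul_left _ (Nat.pow_le_pow_right (by omega) (by omega))
    _ = (2 * (n / 3) + 1) ^ (n / 2 + (n - n / 3 - n / 2)) := (pow_add _ _ _).symm
    _ = (2 * (n / 3) + 1) ^ (n - n / 3) := by congr 1; omega
    _ ≤ ∏ j ∈ Finset.Ico (n / 3) n, (2 * j + 1) := by
        have hp := Finset.pow_card_le_prod (Finset.Ico (n / 3) n) (fun j => 2 * j + 1)
          (2 * (n / 3) + 1) (fun x hx => by rw [Finset.mem_Ico] at hx; show 2 * (n / 3) + 1 ≤ 2 * x + 1; omega)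
        rwa [Nat.card_Ico] at hp
    _ ≤ ∏ j ∈ Finset.range n, (2 * j + 1) := by
        rw [Finset.range_eq_Ico]
        exact Finset.prod_le_prod_of_subset_of_one_le'
          (Finset.Ico_subset_Ico (Nat.zero_le _) le_rfl) (fun i _ _ => by omega)

end RotAux


theorem rotaux_main_bound :
    Filter.Tendsto
      (fun n : ℕ =>
        (Nat.card {M : PMatching n //
            ∃ a : ZMod (2 * n), a ≠ 0 ∧ M.1.image (Finset.image (fun v => v + a)) = M.1} : ℝ) /
          ∏ j ∈ Finset.range n, (2 * j + 1 : ℝ))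
      Filter.atTop (nhds 0) := by
  apply tendsto_of_tendsto_of_tendsto_of_le_of_le' (g := fun _ : ℕ => (0 : ℝ))
    (h := fun n : ℕ => ((1 : ℝ) / 2) ^ n) tendsto_const_nhds
    (tendsto_pow_atTop_nhds_zero_of_lt_one (by norm_num) (by norm_num))
  · refine Filter.Eventually.of_forall fun n => ?_
    apply div_nonneg (Nat.cast_nonneg _)
    exact Finset.prod_nonneg fun j _ => by positivity
  · refine Filter.eventually_atTop.mpr ⟨1152921504606846976, fun n hn => ?_⟩
    haveI : NeZero (2 * n) := ⟨by omega⟩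
    have hc := RotAux.card_fixed_le (n := n)
    have hk := RotAux.key_ineq hn
    have hCD : (Nat.card {M : PMatching n //
        ∃ a : ZMod (2 * n), a ≠ 0 ∧ M.1.image (Finset.image (fun v => v + a)) = M.1}) * 2 ^ n ≤
        ∏ j ∈ Finset.range n, (2 * j + 1) :=
      le_trans (Nat.mul_le_mul_right _ hc) hk
    have hD : (0:ℝ) < ∏ j ∈ Finset.range n, (2 * (j : ℝ) + 1) :=
      Finset.prod_pos fun j _ => by positivity
    have hcast : ((∏ j ∈ Finset.range n, (2 * j + 1) : ℕ) : ℝ) =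
        ∏ j ∈ Finset.range n, (2 * (j : ℝ) + 1) := by
      push_cast
      rfl
    have h2 : (Nat.card {M : PMatching n //
        ∃ a : ZMod (2 * n), a ≠ 0 ∧ M.1.image (Finset.image (fun v => v + a)) = M.1} : ℝ) * 2 ^ n ≤
        ∏ j ∈ Finset.range n, (2 * (j : ℝ) + 1) := by
      rw [← hcast]
      exact_mod_cast hCD
    rw [div_le_iff₀ hD]
    calc (Nat.card {M : PMatching n //
        ∃ a : ZMod (2 * n), a ≠ 0 ∧ M.1.image (Finset.image (fun v => v + a)) = M.1} : ℝ)
        ≤ (∏ j ∈ Finset.range n, (2 * (j : ℝ) + 1)) / 2 ^ n := by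
          rwa [le_div_iff₀ (by positivity)]
      _ = (1 / 2) ^ n * ∏ j ∈ Finset.range n, (2 * (j : ℝ) + 1) := by
          rw [div_pow, one_pow]
          ring


/-- The fraction of perfect matchings of `K_{2n}` fixed by some nontrivial rotation
tends to `0` as `n → ∞`. -/
theorem fraction_fixed_matchings_tendsto_zero :
    Filter.Tendsto
      (fun n : ℕ =>
        (Nat.card {M : PMatching n //
            ∃ a : ZMod (2 * n), a ≠ 0 ∧ M.1.image (Finset.image (fun v => v + a)) = M.1} : ℝ) /
          ∏ j ∈ Finset.range n, (2 * j + 1 : ℝ))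
      Filter.atTop (nhds 0) := rotaux_main_bound
end

section
/- With κ_n = Σ_{k=0}^{⌊n/2⌋} n!/(k!·(n−2k)!) and d_n the number of orbits of perfect matchings of K_{2n} under the dihedral group of order 4n, one has d_n ~ (2n−1)!!/(4n) as n → ∞; in particular n·(κ_{n−1}+κ_n) = o((2n−1)!!). -/
open Nat Finset

/-- Two perfect matchings are dihedrally equivalent if some rotation `v ↦ v + a` or
reflection `v ↦ -v + a` carries the one to the other. -/
def dihRel (n : ℕ) (M M' : PMatching n) : Prop :=
  ∃ a : ZMod (2 * n),
    M'.1 = M.1.image (Finset.image (fun v => v + a)) ∨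
    M'.1 = M.1.image (Finset.image (fun v => -v + a))

/-- The number of orbits of perfect matchings of `K_{2n}` under the dihedral group of
order `4n`. -/
noncomputable def dihOrbitCount (n : ℕ) : ℕ :=
  Set.ncard {S : Set (PMatching n) | ∃ m, S = {m' | dihRel n m m'}}

/-- `κ_n = Σ_{k=0}^{⌊n/2⌋} n!/(k!(n−2k)!)`, the number of involutions in `S_n`. -/
def kappa (n : ℕ) : ℕ := ∑ k ∈ Finset.range (n / 2 + 1), n ! / (k ! * (n - 2 * k)!)


section AuxAll

namespace DihAux

variable {V : Type*} [DecidableEq V]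

def IsPM (s : Finset V) (M : Finset (Finset V)) : Prop :=
  (∀ e ∈ M, e ⊆ s ∧ e.card = 2) ∧ ∀ v ∈ s, ∃! e, e ∈ M ∧ v ∈ e

noncomputable def pmF (s : Finset V) : Finset (Finset (Finset V)) :=
  @Finset.filter _ (IsPM s) (Classical.decPred _) s.powerset.powerset

lemma mem_pmF {s : Finset V} {M : Finset (Finset V)} : M ∈ pmF s ↔ IsPM s M := by
  classical
  simp only [pmF, Finset.mem_filter, Finset.mem_powerset, and_iff_right_iff_imp]
  intro h
  intro e he
  exact Finset.mem_powerset.2 ((h.1 e he).1)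

lemma pmF_empty : pmF (∅ : Finset V) = {∅} := by
  ext M
  simp only [mem_pmF, Finset.mem_singleton, IsPM]
  constructor
  · rintro ⟨h1, _⟩
    ext e
    simp only [Finset.notMem_empty, iff_false]
    intro he
    have := h1 e he
    have : e = ∅ := Finset.subset_empty.1 this.1
    simp [this] at h1
    have := (h1 e he).2
    simp [‹e = ∅›] at this
  · rintro rfl
    exact ⟨by simp, by simp⟩

end DihAux

namespace DihAux
set_option linter.unusedSectionVars false

variable {V : Type*} [DecidableEq V]

lemma edges_avoid {s : Finset V} {a b : V} {M : Finset (Finset V)}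
    (hM : IsPM ((s.erase a).erase b) M) {e : Finset V} (he : e ∈ M) : a ∉ e ∧ b ∉ e := by
  have hsub := (hM.1 e he).1
  constructor
  · intro h
    have := hsub h
    simp [Finset.mem_erase] at this
  · intro h
    have := hsub h
    simp [Finset.mem_erase] at this

lemma isPM_insert {s : Finset V} {a b : V} (ha : a ∈ s) (hb : b ∈ s) (hab : a ≠ b)
    {M : Finset (Finset V)} (hM : IsPM ((s.erase a).erase b) M) :
    IsPM s (insert {a, b} M) := by
  constructor
  · intro e he
    rcases Finset.mem_insert.1 he with rfl | he
    · refine ⟨?_, Finset.card_pair hab⟩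
      intro x hx
      rcases Finset.mem_insert.1 hx with rfl | hx
      · exact ha
      · rw [Finset.mem_singleton] at hx; subst hx; exact hb
    · exact ⟨(hM.1 e he).1.trans ((Finset.erase_subset _ _).trans (Finset.erase_subset _ _)),
        (hM.1 e he).2⟩
  · intro v hv
    by_cases hva : v = a ∨ v = b
    · refine ⟨{a, b}, ⟨Finset.mem_insert_self _ _, ?_⟩, ?_⟩
      · rcases hva with rfl | rfl
        · exact Finset.mem_insert_self _ _
        · exact Finset.mem_insert_of_mem (Finset.mem_singleton_self _)
      · rintro e ⟨he, hve⟩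
        rcases Finset.mem_insert.1 he with rfl | he
        · rfl
        · exfalso
          have := edges_avoid hM he
          rcases hva with rfl | rfl
          · exact this.1 hve
          · exact this.2 hve
    · push_neg at hva
      have hv' : v ∈ (s.erase a).erase b := by
        simp [Finset.mem_erase, hva.1, hva.2, hv]
      obtain ⟨e₀, ⟨he₀, hve₀⟩, huniq⟩ := hM.2 v hv'
      refine ⟨e₀, ⟨Finset.mem_insert_of_mem he₀, hve₀⟩, ?_⟩
      rintro e ⟨he, hve⟩
      rcases Finset.mem_insert.1 he with rfl | he
      · exfalso
        rcases Finset.mem_insert.1 hve with rfl | hve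
        · exact hva.1 rfl
        · rw [Finset.mem_singleton] at hve; exact hva.2 hve
      · exact huniq e ⟨he, hve⟩

lemma isPM_erase {s : Finset V} {M : Finset (Finset V)} (hM : IsPM s M) {a b : V}
    (hab : a ≠ b) (h : {a, b} ∈ M) :
    IsPM ((s.erase a).erase b) (M.erase {a, b}) := by
  have haS : a ∈ s := (hM.1 _ h).1 (Finset.mem_insert_self _ _)
  have hbS : b ∈ s := (hM.1 _ h).1 (Finset.mem_insert_of_mem (Finset.mem_singleton_self _))
  constructor
  · intro e he
    obtain ⟨hne, heM⟩ := Finset.mem_erase.1 he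
    refine ⟨?_, (hM.1 e heM).2⟩
    intro x hx
    have hxs : x ∈ s := (hM.1 e heM).1 hx
    have hxa : x ≠ a := by
      rintro rfl
      obtain ⟨e', ⟨-, -⟩, huniq⟩ := hM.2 x hxs
      have h1 := huniq e ⟨heM, hx⟩
      have h2 := huniq {x, b} ⟨h, Finset.mem_insert_self _ _⟩
      exact hne (h1.trans h2.symm)
    have hxb : x ≠ b := by
      rintro rfl
      obtain ⟨e', ⟨-, -⟩, huniq⟩ := hM.2 x hxs
      have h1 := huniq e ⟨heM, hx⟩
      have h2 := huniq {a, x} ⟨h, Finset.mem_insert_of_mem (Finset.mem_singleton_self _)⟩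
      exact hne (h1.trans h2.symm)
    simp [Finset.mem_erase, hxa, hxb, hxs]
  · intro v hv
    simp only [Finset.mem_erase] at hv
    obtain ⟨hvb, hva, hvs⟩ := hv
    obtain ⟨e₀, ⟨he₀, hve₀⟩, huniq⟩ := hM.2 v hvs
    have hne : e₀ ≠ {a, b} := by
      rintro rfl
      rcases Finset.mem_insert.1 hve₀ with rfl | hx
      · exact hva rfl
      · rw [Finset.mem_singleton] at hx; exact hvb hx
    refine ⟨e₀, ⟨Finset.mem_erase.2 ⟨hne, he₀⟩, hve₀⟩, ?_⟩
    rintro e ⟨he, hve⟩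
    exact huniq e ⟨(Finset.mem_erase.1 he).2, hve⟩

lemma card_pmF_rec {s : Finset V} {a : V} (ha : a ∈ s) :
    (pmF s).card = ∑ b ∈ s.erase a, (pmF ((s.erase a).erase b)).card := by
  classical
  have key : pmF s = (s.erase a).biUnion
      (fun b => (pmF ((s.erase a).erase b)).image (insert {a, b})) := by
    ext M
    simp only [Finset.mem_biUnion, Finset.mem_image]
    constructor
    · intro hM
      have hM' := mem_pmF.1 hM
      obtain ⟨e₀, ⟨he₀, hae₀⟩, -⟩ := hM'.2 a ha
      have hcard := (hM'.1 e₀ he₀).2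
      obtain ⟨x, y, hxy, rfl⟩ := Finset.card_eq_two.1 hcard
      -- a ∈ {x, y}
      have hab : ∃ b, b ≠ a ∧ ({x, y} : Finset V) = {a, b} := by
        rcases Finset.mem_insert.1 hae₀ with rfl | hy
        · exact ⟨y, fun h => hxy h.symm, rfl⟩
        · rw [Finset.mem_singleton] at hy; subst hy
          exact ⟨x, fun h => hxy h, by rw [Finset.pair_comm]⟩
      obtain ⟨b, hba, hpair⟩ := hab
      rw [hpair] at he₀ hcard
      have hbs : b ∈ s := (hM'.1 _ he₀).1 (Finset.mem_insert_of_mem (Finset.mem_singleton_self _))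
      refine ⟨b, Finset.mem_erase.2 ⟨hba, hbs⟩, M.erase {a, b}, ?_, ?_⟩
      · exact mem_pmF.2 (isPM_erase hM' (fun h => hba h.symm) he₀)
      · exact Finset.insert_erase he₀
    · rintro ⟨b, hb, M₁, hM₁, rfl⟩
      obtain ⟨hba, hbs⟩ := Finset.mem_erase.1 hb
      exact mem_pmF.2 (isPM_insert ha hbs (fun h => hba h.symm) (mem_pmF.1 hM₁))
  rw [key, Finset.card_biUnion, ]
  · apply Finset.sum_congr rfl
    intro b hb
    obtain ⟨hba, hbs⟩ := Finset.mem_erase.1 hb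
    apply Finset.card_image_of_injOn
    intro M₁ hM₁ M₂ hM₂ hins
    have h₁ : ({a, b} : Finset V) ∉ M₁ := fun h =>
      (edges_avoid (mem_pmF.1 hM₁) h).1 (Finset.mem_insert_self _ _)
    have h₂ : ({a, b} : Finset V) ∉ M₂ := fun h =>
      (edges_avoid (mem_pmF.1 hM₂) h).1 (Finset.mem_insert_self _ _)
    rw [← Finset.erase_insert h₁, ← Finset.erase_insert h₂, hins]
  · intro b hb b' hb' hne
    simp only [Finset.disjoint_left, Finset.mem_image]
    rintro M ⟨M₁, hM₁, rfl⟩ ⟨M₂, hM₂, hM⟩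
    have hba := (Finset.mem_erase.1 hb).1
    have h1 : ({a, b} : Finset V) ∈ insert {a, b'} M₂ := by
      rw [hM]; exact Finset.mem_insert_self _ _
    rcases Finset.mem_insert.1 h1 with hp | hin
    · have : b ∈ ({a, b'} : Finset V) := by
        rw [← hp]; exact Finset.mem_insert_of_mem (Finset.mem_singleton_self _)
      rcases Finset.mem_insert.1 this with rfl | hbb
      · exact hba rfl
      · rw [Finset.mem_singleton] at hbb; exact hne hbb
    · exact (edges_avoid (mem_pmF.1 hM₂) hin).1 (Finset.mem_insert_self _ _)

lemma card_pmF : ∀ (n : ℕ) {s : Finset V}, s.card = 2 * n →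
    (pmF s).card = ∏ j ∈ Finset.range n, (2 * j + 1) := by
  intro n
  induction n with
  | zero =>
    intro s hs
    rw [Finset.card_eq_zero.1 hs, pmF_empty]
    simp
  | succ n ih =>
    intro s hs
    have hpos : 0 < s.card := by omega
    obtain ⟨a, ha⟩ := Finset.card_pos.1 hpos
    rw [card_pmF_rec ha]
    have hcard : (s.erase a).card = 2 * n + 1 := by
      rw [Finset.card_erase_of_mem ha]; omega
    have : ∀ b ∈ s.erase a, (pmF ((s.erase a).erase b)).card
        = ∏ j ∈ Finset.range n, (2 * j + 1) := by
      intro b hb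
      apply ih
      rw [Finset.card_erase_of_mem hb]
      omega
    rw [Finset.sum_congr rfl this, Finset.sum_const, hcard, Finset.prod_range_succ]
    ring

end DihAux

open Finset

namespace DihAux

set_option linter.unusedSectionVars false
set_option maxHeartbeats 1000000

variable {V : Type*} [Fintype V] [DecidableEq V]

/-- involutions commuting with σ (not nec. fixed-point-free) -/
def PiSet (σ : V → V) : Type _ :=
  {π : V → V // (∀ v, π (π v) = v) ∧ ∀ v, π (σ v) = σ (π v)}

instance (σ : V → V) : Finite (PiSet σ) := by unfold PiSet; infer_instance

section InvLemma

variable (σ : V → V) (ι : V → ℕ)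

private def Wset : Finset V := univ.filter (fun x => ι x ≤ ι (σ x))

private def tauf (π : V → V) : V → V :=
  fun x => if ι (π x) ≤ ι (σ (π x)) then π x else σ (π x)

private def Pset (π : V → V) : Finset V :=
  (Wset σ ι).filter (fun x => ι x < ι (tauf σ ι π x))

variable {σ ι}

private lemma mem_Wset {x : V} : x ∈ Wset σ ι ↔ ι x ≤ ι (σ x) := by
  simp [Wset]

section pi

variable (hσ : ∀ v, σ (σ v) = v) (hι : Function.Injective ι)
  {π : V → V} (hπ : (∀ v, π (π v) = v) ∧ ∀ v, π (σ v) = σ (π v))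

include hσ in
private lemma tauf_mem_W (x : V) : tauf σ ι π x ∈ Wset σ ι := by
  rw [mem_Wset, tauf]
  split_ifs with h
  · exact h
  · rw [hσ]
    omega

include hσ in
private lemma pi_recov (x : V) :
    π x = if ι (π x) ≤ ι (σ (π x)) then tauf σ ι π x else σ (tauf σ ι π x) := by
  rw [tauf]
  split_ifs with h
  · rfl
  · rw [hσ]

include hσ hι hπ in
private lemma tauf_invol {x : V} (hx : x ∈ Wset σ ι) : tauf σ ι π (tauf σ ι π x) = x := by
  rw [mem_Wset] at hx
  by_cases h : ι (π x) ≤ ι (σ (π x))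
  · have h1 : tauf σ ι π x = π x := by rw [tauf, if_pos h]
    rw [h1, tauf, hπ.1, if_pos hx]
  · have h1 : tauf σ ι π x = σ (π x) := by rw [tauf, if_neg h]
    have h2 : π (σ (π x)) = σ x := by rw [hπ.2, hπ.1]
    rw [h1, tauf, h2, hσ]
    split_ifs with h3
    · -- ι (σ x) ≤ ι x together with hx gives σ x = x
      have : ι (σ x) = ι x := le_antisymm h3 hx
      exact hι this
    · rfl

include hσ hι hπ in
private lemma tauf_invol_inj {a b : V} (ha : a ∈ Wset σ ι) (hb : b ∈ Wset σ ι)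
    (h : tauf σ ι π a = tauf σ ι π b) : a = b := by
  have := tauf_invol hσ hι hπ ha
  rw [h, tauf_invol hσ hι hπ hb] at this
  exact this.symm

end pi

/-- cardinality of the half-set W -/
private lemma card_Wset (hσ : ∀ v, σ (σ v) = v) (hι : Function.Injective ι) :
    2 * (Wset σ ι).card = Fintype.card V + (univ.filter (fun x => σ x = x)).card := by
  classical
  set A := univ.filter (fun x : V => ι x < ι (σ x)) with hA
  set B := univ.filter (fun x : V => ι (σ x) < ι x) with hB
  set C := univ.filter (fun x : V => σ x = x) with hC
  have hWAC : Wset σ ι = A ∪ C := by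
    ext x
    simp only [mem_Wset, hA, hC, Finset.mem_union, Finset.mem_filter, Finset.mem_univ,
      true_and]
    constructor
    · intro h
      rcases lt_or_eq_of_le h with h' | h'
      · exact Or.inl h'
      · exact Or.inr (hι h').symm
    · rintro (h | h)
      · exact le_of_lt h
      · rw [h]
    
  have hdisj : Disjoint A C := by
    rw [Finset.disjoint_left]
    intro x hx hx'
    simp only [hA, Finset.mem_filter] at hx
    simp only [hC, Finset.mem_filter] at hx'
    rw [hx'.2] at hx
    omega
  have hAB : B = A.image σ := by
    ext x
    simp only [hA, hB, Finset.mem_filter, Finset.mem_univ, true_and, Finset.mem_image]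
    constructor
    · intro h
      exact ⟨σ x, by rw [hσ]; exact h, hσ x⟩
    · rintro ⟨a, ha, rfl⟩
      rw [hσ]
      exact ha
  have hcardAB : B.card = A.card := by
    rw [hAB]
    apply Finset.card_image_of_injective
    intro a b hab
    have := congrArg σ hab
    rwa [hσ, hσ] at this
  have hsplit : A.card + B.card + C.card = Fintype.card V := by
    have h1 : (univ.filter (fun x : V => ι x ≤ ι (σ x))).card
        + (univ.filter (fun x : V => ¬ ι x ≤ ι (σ x))).card = Fintype.card V := by
      rw [Finset.card_filter_add_card_filter_not]
      exact Finset.card_univ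
    have h2 : (univ.filter (fun x : V => ¬ ι x ≤ ι (σ x))) = B := by
      ext x
      simp only [hB, Finset.mem_filter, Finset.mem_univ, true_and]
      omega
    have h3 : (univ.filter (fun x : V => ι x ≤ ι (σ x))) = A ∪ C := by
      rw [← hWAC]; rfl
    rw [h2, h3, Finset.card_union_of_disjoint hdisj] at h1
    omega
  rw [hWAC, Finset.card_union_of_disjoint hdisj]
  omega

private lemma card_Pset (hσ : ∀ v, σ (σ v) = v) (hι : Function.Injective ι)
    {π : V → V} (hπ : (∀ v, π (π v) = v) ∧ ∀ v, π (σ v) = σ (π v)) :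
    2 * (Pset σ ι π).card ≤ (Wset σ ι).card := by
  classical
  have hPW : Pset σ ι π ⊆ Wset σ ι := Finset.filter_subset _ _
  have himg : (Pset σ ι π).image (tauf σ ι π) ⊆ Wset σ ι := by
    intro x hx
    obtain ⟨a, _, rfl⟩ := Finset.mem_image.1 hx
    exact tauf_mem_W hσ a
  have hinj : ((Pset σ ι π).image (tauf σ ι π)).card = (Pset σ ι π).card := by
    apply Finset.card_image_of_injOn
    intro a ha b hb hab
    exact tauf_invol_inj hσ hι hπ (hPW ha) (hPW hb) hab
  have hdisj : Disjoint (Pset σ ι π) ((Pset σ ι π).image (tauf σ ι π)) := by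
    rw [Finset.disjoint_left]
    intro x hx hx'
    obtain ⟨a, ha, hax⟩ := Finset.mem_image.1 hx'
    simp only [Pset, Finset.mem_filter] at hx ha
    rw [← hax] at hx
    have haW : a ∈ Wset σ ι := ha.1
    have h1 := tauf_invol hσ hι hπ haW
    rw [h1] at hx
    omega
  have := Finset.card_union_of_disjoint hdisj
  have hle := Finset.card_le_card (Finset.union_subset hPW himg)
  omega

private lemma tauf_eq_of_enc_eq (hσ : ∀ v, σ (σ v) = v) (hι : Function.Injective ι)
    {π π' : V → V} (hπ : (∀ v, π (π v) = v) ∧ ∀ v, π (σ v) = σ (π v))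
    (hπ' : (∀ v, π' (π' v) = v) ∧ ∀ v, π' (σ v) = σ (π' v))
    (hP : Pset σ ι π = Pset σ ι π')
    (hu : ∀ a ∈ Pset σ ι π, tauf σ ι π a = tauf σ ι π' a)
    {x : V} (hxW : x ∈ Wset σ ι) : tauf σ ι π x = tauf σ ι π' x := by
  rcases lt_trichotomy (ι x) (ι (tauf σ ι π x)) with hlt | heq | hgt
  · have hxP : x ∈ Pset σ ι π := Finset.mem_filter.2 ⟨hxW, hlt⟩
    exact hu x hxP
  · have hx : tauf σ ι π x = x := (hι heq).symm
    rw [hx]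
    rcases lt_trichotomy (ι x) (ι (tauf σ ι π' x)) with hlt' | heq' | hgt'
    · exfalso
      have hxP' : x ∈ Pset σ ι π' := Finset.mem_filter.2 ⟨hxW, hlt'⟩
      rw [← hP] at hxP'
      have := (Finset.mem_filter.1 hxP').2
      rw [hx] at this
      omega
    · exact hι heq'
    · exfalso
      set y := tauf σ ι π' x with hy
      have hyW : y ∈ Wset σ ι := tauf_mem_W hσ x
      have hyx : tauf σ ι π' y = x := tauf_invol hσ hι hπ' hxW
      have hyP' : y ∈ Pset σ ι π' := by
        refine Finset.mem_filter.2 ⟨hyW, ?_⟩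
        rw [hyx]
        exact hgt'
      rw [← hP] at hyP'
      have h1 : tauf σ ι π y = tauf σ ι π' y := hu y hyP'
      rw [hyx] at h1
      have h2 : tauf σ ι π (tauf σ ι π y) = y := tauf_invol hσ hι hπ hyW
      rw [h1, hx] at h2
      rw [← h2] at hgt'
      omega
  · set y := tauf σ ι π x with hy
    have hyW : y ∈ Wset σ ι := tauf_mem_W hσ x
    have hyx : tauf σ ι π y = x := tauf_invol hσ hι hπ hxW
    have hyP : y ∈ Pset σ ι π := by
      refine Finset.mem_filter.2 ⟨hyW, ?_⟩
      rw [hyx]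
      exact hgt
    have h1 : tauf σ ι π' y = x := by rw [← hu y hyP, hyx]
    have h2 : tauf σ ι π' (tauf σ ι π' y) = y := tauf_invol hσ hι hπ' hyW
    rw [h1] at h2
    exact h2.symm

private lemma pi_eq_of_enc_eq (hσ : ∀ v, σ (σ v) = v) (hι : Function.Injective ι)
    {π π' : V → V} (hπ : (∀ v, π (π v) = v) ∧ ∀ v, π (σ v) = σ (π v))
    (hπ' : (∀ v, π' (π' v) = v) ∧ ∀ v, π' (σ v) = σ (π' v))
    (hP : Pset σ ι π = Pset σ ι π')
    (hu : ∀ a ∈ Pset σ ι π, tauf σ ι π a = tauf σ ι π' a)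
    (hε : ∀ x, (ι (π x) ≤ ι (σ (π x))) ↔ (ι (π' x) ≤ ι (σ (π' x)))) : π = π' := by
  have stepB : ∀ x ∈ Wset σ ι, π x = π' x := by
    intro x hxW
    have hT := tauf_eq_of_enc_eq hσ hι hπ hπ' hP hu hxW
    by_cases hc : ι (π x) ≤ ι (σ (π x))
    · have hc' : ι (π' x) ≤ ι (σ (π' x)) := (hε x).1 hc
      rw [pi_recov hσ (π := π) x, pi_recov hσ (π := π') x, if_pos hc, if_pos hc', hT]
    · have hc' : ¬ ι (π' x) ≤ ι (σ (π' x)) := fun h => hc ((hε x).2 h)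
      rw [pi_recov hσ (π := π) x, pi_recov hσ (π := π') x, if_neg hc, if_neg hc', hT]
  funext x
  by_cases hxW : x ∈ Wset σ ι
  · exact stepB x hxW
  · rw [mem_Wset] at hxW
    have hσxW : σ x ∈ Wset σ ι := by
      rw [mem_Wset, hσ]
      omega
    have h1 : π x = σ (π (σ x)) := by
      conv_lhs => rw [← hσ x, hπ.2]
    have h2 : π' x = σ (π' (σ x)) := by
      conv_lhs => rw [← hσ x, hπ'.2]
    rw [h1, h2, stepB _ hσxW]

/-- the key counting bound for involutions -/
lemma card_piSet_invol (hV : 1 ≤ Fintype.card V)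
    (hσ : ∀ v, σ (σ v) = v) (hι : Function.Injective ι)
    (hC : (univ.filter (fun x => σ x = x)).card ≤ 2) :
    Nat.card (PiSet σ) ≤
      2 ^ Fintype.card V * 2 ^ Fintype.card V *
        Fintype.card V ^ ((Fintype.card V + 2) / 4) := by
  classical
  obtain ⟨v₀⟩ : Nonempty V := Fintype.card_pos_iff.1 hV
  set bnd := (Fintype.card V + 2) / 4 with hbnd
  set Pow : Finset (Finset V) :=
    (Wset σ ι).powerset.filter (fun P => 4 * P.card ≤ Fintype.card V + 2) with hPow
  set FunsOn : Finset V → Finset (V → V) := fun P =>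
    (P.pi (fun _ => (univ : Finset V))).image
      (fun f => fun a => if h : a ∈ P then f a h else v₀) with hFunsOn
  set Tgt : Finset (Finset V × (V → V) × (V → Bool)) :=
    Pow.biUnion (fun P => {P} ×ˢ FunsOn P ×ˢ (univ : Finset (V → Bool))) with hTgt
  set enc : PiSet σ → (Finset V × (V → V) × (V → Bool)) :=
    fun π => (Pset σ ι π.1,
      fun a => if h : a ∈ Pset σ ι π.1 then tauf σ ι π.1 a else v₀,
      fun x => decide (ι (π.1 x) ≤ ι (σ (π.1 x)))) with henc
  have hcardP : ∀ π : PiSet σ, 4 * (Pset σ ι π.1).card ≤ Fintype.card V + 2 := by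
    intro π
    have h1 := card_Pset hσ hι π.2
    have h2 := card_Wset hσ hι (σ := σ) (ι := ι)
    omega
  have hmem : ∀ π : PiSet σ, enc π ∈ Tgt := by
    intro π
    rw [hTgt, henc]
    apply Finset.mem_biUnion.2
    refine ⟨Pset σ ι π.1, ?_, ?_⟩
    · exact Finset.mem_filter.2 ⟨Finset.mem_powerset.2 (Finset.filter_subset _ _), hcardP π⟩
    · refine Finset.mem_product.2 ⟨Finset.mem_singleton_self _, ?_⟩
      refine Finset.mem_product.2 ⟨?_, Finset.mem_univ _⟩
      rw [hFunsOn]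
      apply Finset.mem_image.2
      exact ⟨fun a _ => tauf σ ι π.1 a, Finset.mem_pi.2 fun a _ => Finset.mem_univ _, rfl⟩
  have hinj : Function.Injective enc := by
    intro π π' h
    rw [henc] at h
    simp only [Prod.mk.injEq] at h
    obtain ⟨hP, hu, hε⟩ := h
    apply Subtype.ext
    refine pi_eq_of_enc_eq hσ hι π.2 π'.2 hP ?_ ?_
    · intro a ha
      have h1 := congrFun hu a
      rw [dif_pos ha, dif_pos (hP ▸ ha : a ∈ Pset σ ι π'.1)] at h1
      exact h1
    · intro x
      have := congrFun hε x
      simpa using this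
  have hcard1 : Nat.card (PiSet σ) ≤ Tgt.card := by
    have h1 : Nat.card (PiSet σ) ≤ Nat.card {x // x ∈ Tgt} := by
      apply Nat.card_le_card_of_injective (fun π => (⟨enc π, hmem π⟩ : {x // x ∈ Tgt}))
      intro a b hab
      exact hinj (congrArg Subtype.val hab)
    rwa [Nat.card_eq_finsetCard] at h1
  refine hcard1.trans ?_
  have hterm : ∀ P ∈ Pow,
      ({P} ×ˢ FunsOn P ×ˢ (univ : Finset (V → Bool))).card
        ≤ Fintype.card V ^ bnd * 2 ^ Fintype.card V := by
    intro P hP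
    obtain ⟨hPW, hPc⟩ := Finset.mem_filter.1 hP
    rw [Finset.card_product, Finset.card_product, Finset.card_singleton, one_mul]
    have h1 : (FunsOn P).card ≤ Fintype.card V ^ P.card := by
      rw [hFunsOn]
      refine (Finset.card_image_le).trans ?_
      rw [Finset.card_pi]
      rw [Finset.prod_const, Finset.card_univ]
    have h2 : Fintype.card V ^ P.card ≤ Fintype.card V ^ bnd := by
      apply Nat.pow_le_pow_right hV
      rw [hbnd, Nat.le_div_iff_mul_le (by norm_num)]
      omega
    have h3 : (univ : Finset (V → Bool)).card = 2 ^ Fintype.card V := by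
      rw [Finset.card_univ, Fintype.card_fun, Fintype.card_bool]
    rw [h3]
    exact Nat.mul_le_mul (h1.trans h2) le_rfl
  calc Tgt.card ≤ ∑ P ∈ Pow, ({P} ×ˢ FunsOn P ×ˢ (univ : Finset (V → Bool))).card :=
        Finset.card_biUnion_le
    _ ≤ ∑ _P ∈ Pow, Fintype.card V ^ bnd * 2 ^ Fintype.card V := Finset.sum_le_sum hterm
    _ = Pow.card * (Fintype.card V ^ bnd * 2 ^ Fintype.card V) := by
        rw [Finset.sum_const, smul_eq_mul]
    _ ≤ 2 ^ Fintype.card V * (Fintype.card V ^ bnd * 2 ^ Fintype.card V) := by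
        apply Nat.mul_le_mul_right
        calc Pow.card ≤ (Wset σ ι).powerset.card := Finset.card_le_card (Finset.filter_subset _ _)
          _ = 2 ^ (Wset σ ι).card := Finset.card_powerset _
          _ ≤ 2 ^ Fintype.card V := Nat.pow_le_pow_right (by norm_num)
              ((Finset.card_le_card (Finset.subset_univ _)).trans_eq Finset.card_univ)
    _ = 2 ^ Fintype.card V * 2 ^ Fintype.card V * Fintype.card V ^ bnd := by ring

end InvLemma

end DihAux

namespace DihAux

open Finset

lemma card_piSet_rot {n : ℕ} (hn : 0 < n) (i : ZMod (2 * n)) (d : ℕ) (hd : 0 < d)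
    (hgen : ∃ k : ℕ, (k : ZMod (2 * n)) * i = (d : ZMod (2 * n))) :
    Nat.card (PiSet (fun v : ZMod (2 * n) => v + i)) ≤ (2 * n) ^ d := by
  haveI : NeZero (2 * n) := ⟨by omega⟩
  obtain ⟨k, hk⟩ := hgen
  have stepC : ∀ (π : PiSet (fun v : ZMod (2 * n) => v + i)) (w : ZMod (2 * n)) (c : ℕ),
      π.1 (w + (c : ZMod (2 * n)) * i) = π.1 w + (c : ZMod (2 * n)) * i := by
    intro π w c
    induction c with
    | zero => simp
    | succ c ih =>
      have h1 : ((c + 1 : ℕ) : ZMod (2 * n)) * i = (c : ZMod (2 * n)) * i + i := by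
        push_cast; ring
      have h2 : π.1 ((w + (c : ZMod (2 * n)) * i) + i) = π.1 (w + (c : ZMod (2 * n)) * i) + i :=
        π.2.2 (w + (c : ZMod (2 * n)) * i)
      rw [h1, ← add_assoc, h2, ih, add_assoc]
  have stepD : ∀ (π : PiSet (fun v : ZMod (2 * n) => v + i)) (w : ZMod (2 * n)) (c : ℕ),
      π.1 (w + (c : ZMod (2 * n)) * (d : ZMod (2 * n)))
        = π.1 w + (c : ZMod (2 * n)) * (d : ZMod (2 * n)) := by
    intro π w c
    have heq : (c : ZMod (2 * n)) * (d : ZMod (2 * n)) = ((c * k : ℕ) : ZMod (2 * n)) * i := by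
      push_cast
      rw [mul_assoc, hk]
    rw [heq, stepC]
  have recon : ∀ (π : PiSet (fun v : ZMod (2 * n) => v + i)) (v : ZMod (2 * n)),
      π.1 v = π.1 ((v.val % d : ℕ) : ZMod (2 * n))
        + ((v.val / d : ℕ) : ZMod (2 * n)) * (d : ZMod (2 * n)) := by
    intro π v
    have h2 : ((v.val % d) + (v.val / d) * d : ℕ) = v.val := Nat.mod_add_div' v.val d
    have h3 : ((v.val % d + v.val / d * d : ℕ) : ZMod (2 * n))
        = ((v.val % d : ℕ) : ZMod (2 * n))
          + ((v.val / d : ℕ) : ZMod (2 * n)) * (d : ZMod (2 * n)) := by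
      push_cast
      ring
    have h1 : v = ((v.val % d : ℕ) : ZMod (2 * n))
        + ((v.val / d : ℕ) : ZMod (2 * n)) * (d : ZMod (2 * n)) := by
      rw [← h3, h2]
      exact (ZMod.natCast_rightInverse v).symm
    conv_lhs => rw [h1]
    rw [stepD]
  have hle : Nat.card (PiSet (fun v : ZMod (2 * n) => v + i))
      ≤ Nat.card (Fin d → ZMod (2 * n)) := by
    apply Nat.card_le_card_of_injective
      (fun π : PiSet (fun v : ZMod (2 * n) => v + i) =>
        (fun t : Fin d => π.1 ((t.1 : ℕ) : ZMod (2 * n))))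
    intro π π' h
    apply Subtype.ext
    funext v
    rw [recon π v, recon π' v]
    have := congrFun h ⟨v.val % d, Nat.mod_lt _ hd⟩
    simp only at this
    rw [this]
  refine hle.trans ?_
  rw [Nat.card_eq_fintype_card, Fintype.card_fun, ZMod.card, Fintype.card_fin]

end DihAux
open MulAction

namespace DihAux

variable {n : ℕ}

lemma finite_pm (hn : 0 < n) : Finite (PMatching n) := by
  haveI : NeZero (2 * n) := ⟨by omega⟩
  unfold PMatching
  infer_instance

instance dihAct (n : ℕ) : MulAction (DihedralGroup (2 * n)) (ZMod (2 * n)) where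
  smul g v := match g with
    | .r i => v + i
    | .sr i => -v - i
  one_smul v := by
    show v + (0 : ZMod (2 * n)) = v
    simp
  mul_smul g h v := by
    rcases g with i | i <;> rcases h with j | j
    · show v + (i + j) = v + j + i; ring
    · show -v - (j - i) = -v - j + i; ring
    · show -v - (i + j) = -(v + j) - i; ring
    · show v + (j - i) = -(-v - j) - i; ring

@[simp] lemma r_smul (i : ZMod (2 * n)) (v : ZMod (2 * n)) :
    (DihedralGroup.r i) • v = v + i := rfl

@[simp] lemma sr_smul (i : ZMod (2 * n)) (v : ZMod (2 * n)) :
    (DihedralGroup.sr i) • v = -v - i := rfl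

/-- the action on matchings -/
lemma isPM_image {g : DihedralGroup (2 * n)} {M : Finset (Finset (ZMod (2 * n)))}
    (hM : (∀ e ∈ M, e.card = 2) ∧ ∀ v : ZMod (2 * n), ∃! e, e ∈ M ∧ v ∈ e) :
    (∀ e ∈ M.image (Finset.image (g • ·)), e.card = 2) ∧
      ∀ v : ZMod (2 * n), ∃! e, e ∈ M.image (Finset.image (g • ·)) ∧ v ∈ e := by
  have hinj : Function.Injective (g • · : ZMod (2 * n) → ZMod (2 * n)) :=
    MulAction.injective g
  constructor
  · intro e he
    obtain ⟨e₀, he₀, rfl⟩ := Finset.mem_image.1 he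
    rw [Finset.card_image_of_injective _ hinj]
    exact hM.1 e₀ he₀
  · intro v
    obtain ⟨e₀, ⟨he₀, hwe₀⟩, huniq⟩ := hM.2 (g⁻¹ • v)
    refine ⟨e₀.image (g • ·), ⟨Finset.mem_image_of_mem _ he₀, ?_⟩, ?_⟩
    · have : v = g • (g⁻¹ • v) := (smul_inv_smul g v).symm
      rw [this]
      exact Finset.mem_image_of_mem _ hwe₀
    · rintro e ⟨he, hve⟩
      obtain ⟨e₁, he₁, rfl⟩ := Finset.mem_image.1 he
      obtain ⟨w, hw, hgw⟩ := Finset.mem_image.1 hve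
      have hw' : w = g⁻¹ • v := by rw [← hgw, inv_smul_smul]
      have : e₁ = e₀ := huniq e₁ ⟨he₁, hw' ▸ hw⟩
      rw [this]

instance pmAct (n : ℕ) : MulAction (DihedralGroup (2 * n)) (PMatching n) where
  smul g M := ⟨M.1.image (Finset.image (g • ·)), isPM_image M.2⟩
  one_smul M := by
    apply Subtype.ext
    show M.1.image (Finset.image ((1 : DihedralGroup (2 * n)) • ·)) = M.1
    have h1 : ((1 : DihedralGroup (2 * n)) • · : ZMod (2 * n) → ZMod (2 * n)) = id :=
      funext fun v => add_zero v
    rw [h1]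
    have h2 : (Finset.image (id : ZMod (2 * n) → ZMod (2 * n))) = id :=
      funext fun e => Finset.image_id
    rw [h2, Finset.image_id]
  mul_smul g h M := by
    apply Subtype.ext
    show M.1.image (Finset.image ((g * h) • ·)) =
      (M.1.image (Finset.image (h • ·))).image (Finset.image (g • ·))
    rw [Finset.image_image]
    apply Finset.image_congr
    intro e _
    show e.image ((g * h) • ·) = (e.image (h • ·)).image (g • ·)
    rw [Finset.image_image]
    apply Finset.image_congr
    intro v _
    show (g * h) • v = g • h • v
    rw [mul_smul]

lemma smul_pm_def (g : DihedralGroup (2 * n)) (M : PMatching n) :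
    (g • M).1 = M.1.image (Finset.image (g • ·)) := rfl

lemma dihRel_iff_orbit (M M' : PMatching n) :
    dihRel n M M' ↔ M' ∈ MulAction.orbit (DihedralGroup (2 * n)) M := by
  constructor
  · rintro ⟨a, h | h⟩
    · refine ⟨DihedralGroup.r a, ?_⟩
      apply Subtype.ext
      rw [smul_pm_def, h]
      rfl
    · refine ⟨DihedralGroup.sr (-a), ?_⟩
      apply Subtype.ext
      rw [smul_pm_def, h]
      apply Finset.image_congr
      intro e _
      apply Finset.image_congr
      intro v _
      show DihedralGroup.sr (-a) • v = -v + a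
      rw [sr_smul]; ring
  · rintro ⟨g, rfl⟩
    rcases g with i | i
    · exact ⟨i, Or.inl (by rw [smul_pm_def]; rfl)⟩
    · refine ⟨-i, Or.inr ?_⟩
      rw [smul_pm_def]
      apply Finset.image_congr
      intro e _
      apply Finset.image_congr
      intro v _
      show DihedralGroup.sr i • v = -v + -i
      rw [sr_smul]; ring

lemma orbit_set_eq (M : PMatching n) :
    {m' | dihRel n M m'} = MulAction.orbit (DihedralGroup (2 * n)) M :=
  Set.ext fun m' => dihRel_iff_orbit M m'

end DihAux

namespace DihAux

variable {n : ℕ}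

abbrev G (n : ℕ) := DihedralGroup (2 * n)

lemma orbitSetEq :
    {S : Set (PMatching n) | ∃ m, S = {m' | dihRel n m m'}}
      = Set.range (fun m : PMatching n => MulAction.orbit (G n) m) := by
  ext S
  simp only [Set.mem_setOf_eq, Set.mem_range]
  constructor
  · rintro ⟨m, rfl⟩; exact ⟨m, (orbit_set_eq m).symm⟩
  · rintro ⟨m, rfl⟩; exact ⟨m, (orbit_set_eq m).symm⟩

lemma dihOrbitCount_eq_card_quotient :
    dihOrbitCount n = Nat.card (MulAction.orbitRel.Quotient (G n) (PMatching n)) := by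
  rw [dihOrbitCount, orbitSetEq, ← Nat.card_coe_set_eq]
  apply Nat.card_congr
  symm
  refine Equiv.ofBijective
    (fun q => Quotient.liftOn q
      (fun m => (⟨MulAction.orbit (G n) m, m, rfl⟩ :
        Set.range (fun m : PMatching n => MulAction.orbit (G n) m)))
      (fun a b h => Subtype.ext (MulAction.orbit_eq_iff.2 h))) ⟨?_, ?_⟩
  · intro q q'
    induction q using Quotient.ind
    induction q' using Quotient.ind
    intro h
    apply Quotient.sound
    have := congrArg Subtype.val h
    exact MulAction.orbit_eq_iff.1 this
  · rintro ⟨S, m, rfl⟩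
    exact ⟨Quotient.mk _ m, rfl⟩

/-- matchings with a nontrivial symmetry -/
noncomputable def NFix (n : ℕ) : ℕ :=
  Nat.card {m : PMatching n // ∃ g : G n, g ≠ 1 ∧ g • m = m}

lemma orbit_bounds (hn : 0 < n) :
    Nat.card (PMatching n) ≤ 4 * n * dihOrbitCount n ∧
      4 * n * dihOrbitCount n ≤ Nat.card (PMatching n) + 4 * n * NFix n := by
  classical
  haveI : NeZero (2 * n) := ⟨by omega⟩
  haveI : Finite (PMatching n) := finite_pm hn
  haveI : Fintype (PMatching n) := Fintype.ofFinite _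
  have hG : Nat.card (G n) = 4 * n := by
    rw [Nat.card_eq_fintype_card, DihedralGroup.card]; ring
  -- orbit-stabilizer
  have ostab : ∀ m : PMatching n,
      Nat.card (MulAction.orbit (G n) m) * Nat.card (MulAction.stabilizer (G n) m) = 4 * n := by
    intro m
    rw [← hG]
    haveI : Fintype (MulAction.orbit (G n) m) := Fintype.ofFinite _
    haveI : Fintype (MulAction.stabilizer (G n) m) := Fintype.ofFinite _
    rw [Nat.card_eq_fintype_card, Nat.card_eq_fintype_card, Nat.card_eq_fintype_card]
    exact MulAction.card_orbit_mul_card_stabilizer_eq_card_group (G n) m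
  have horb_le : ∀ m : PMatching n, Nat.card (MulAction.orbit (G n) m) ≤ 4 * n := by
    intro m
    have := ostab m
    have hpos : 0 < Nat.card (MulAction.stabilizer (G n) m) := Nat.card_pos
    nlinarith [this, hpos]
  have hsmall : ∀ m : PMatching n, Nat.card (MulAction.orbit (G n) m) < 4 * n →
      ∃ g : G n, g ≠ 1 ∧ g • m = m := by
    intro m hlt
    have h1 : Nat.card (MulAction.stabilizer (G n) m) ≠ 1 := by
      intro h
      have h2 := ostab m
      rw [h, mul_one] at h2
      omega
    have h2 : 1 < Nat.card (MulAction.stabilizer (G n) m) := by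
      have := Nat.card_pos (α := MulAction.stabilizer (G n) m)
      omega
    haveI : Nontrivial (MulAction.stabilizer (G n) m) := Finite.one_lt_card_iff_nontrivial.1 h2
    obtain ⟨x, hx⟩ := exists_ne (1 : MulAction.stabilizer (G n) m)
    refine ⟨x.1, ?_, x.2⟩
    intro h
    exact hx (Subtype.ext h)
  -- sigma decomposition
  set Q := MulAction.orbitRel.Quotient (G n) (PMatching n) with hQ
  haveI : Fintype Q := Fintype.ofFinite _
  have hsum : Fintype.card (PMatching n)
      = ∑ ω : Q, Nat.card (MulAction.orbit (G n) ω.out) := by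
    rw [Fintype.card_congr (MulAction.selfEquivSigmaOrbits (G n) (PMatching n))]
    rw [Fintype.card_sigma]
    apply Finset.sum_congr rfl
    intro ω _
    rw [Nat.card_eq_fintype_card]
  have hd : dihOrbitCount n = Fintype.card Q := by
    rw [dihOrbitCount_eq_card_quotient, Nat.card_eq_fintype_card]
  -- key identity
  have hkey : 4 * n * dihOrbitCount n
      = Fintype.card (PMatching n) + ∑ ω : Q, (4 * n - Nat.card (MulAction.orbit (G n) ω.out)) := by
    rw [hd, hsum, ← Finset.sum_add_distrib]
    rw [Finset.card_univ.symm, Finset.card_eq_sum_ones, Finset.mul_sum]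
    apply Finset.sum_congr rfl
    intro ω _
    have := horb_le ω.out
    omega
  -- the small-orbit sum is at most 4n * NFix
  have hextra : ∑ ω : Q, (4 * n - Nat.card (MulAction.orbit (G n) ω.out)) ≤ 4 * n * NFix n := by
    set small : Q → Prop := fun ω => Nat.card (MulAction.orbit (G n) ω.out) < 4 * n with hsm
    have step1 : ∑ ω : Q, (4 * n - Nat.card (MulAction.orbit (G n) ω.out))
        = ∑ ω ∈ Finset.univ.filter small, (4 * n - Nat.card (MulAction.orbit (G n) ω.out)) := by
      symm
      apply Finset.sum_filter_of_ne
      intro ω _ hne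
      have := horb_le ω.out
      show Nat.card (MulAction.orbit (G n) ω.out) < 4 * n
      omega
    have step2 : ∑ ω ∈ Finset.univ.filter small, (4 * n - Nat.card (MulAction.orbit (G n) ω.out))
        ≤ (Finset.univ.filter small).card * (4 * n) := by
      apply Finset.sum_le_card_nsmul
      intro ω _
      omega
    have step3 : (Finset.univ.filter small).card ≤ NFix n := by
      rw [← Fintype.card_subtype]
      haveI : Fintype {m : PMatching n // ∃ g : G n, g ≠ 1 ∧ g • m = m} := Fintype.ofFinite _
      rw [NFix, Nat.card_eq_fintype_card]
      apply Fintype.card_le_of_injective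
        (f := fun ω => (⟨ω.1.out, hsmall ω.1.out ω.2⟩ :
          {m : PMatching n // ∃ g : G n, g ≠ 1 ∧ g • m = m}))
      intro ω ω' h
      have := congrArg Subtype.val h
      exact Subtype.ext (Quotient.out_injective this)
    calc ∑ ω : Q, (4 * n - Nat.card (MulAction.orbit (G n) ω.out))
        = ∑ ω ∈ Finset.univ.filter small, (4 * n - Nat.card (MulAction.orbit (G n) ω.out)) := step1
      _ ≤ (Finset.univ.filter small).card * (4 * n) := step2
      _ ≤ NFix n * (4 * n) := Nat.mul_le_mul_right _ step3
      _ = 4 * n * NFix n := by ring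
  rw [Nat.card_eq_fintype_card]
  omega

end DihAux

namespace DihAux

open Finset

variable {n : ℕ}

noncomputable def edgeAt (m : PMatching n) (v : ZMod (2 * n)) : Finset (ZMod (2 * n)) :=
  (m.2.2 v).exists.choose

lemma edgeAt_mem (m : PMatching n) (v : ZMod (2 * n)) :
    edgeAt m v ∈ m.1 ∧ v ∈ edgeAt m v :=
  (m.2.2 v).exists.choose_spec

lemma edgeAt_unique {m : PMatching n} {v : ZMod (2 * n)} {e : Finset (ZMod (2 * n))}
    (he : e ∈ m.1) (hv : v ∈ e) : e = edgeAt m v :=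
  (m.2.2 v).unique ⟨he, hv⟩ (edgeAt_mem m v)

lemma exists_partner (m : PMatching n) (v : ZMod (2 * n)) :
    ∃ w, w ≠ v ∧ edgeAt m v = {v, w} := by
  have hcard : (edgeAt m v).card = 2 := m.2.1 _ (edgeAt_mem m v).1
  obtain ⟨x, y, hxy, hxyeq⟩ := Finset.card_eq_two.1 hcard
  have hv : v ∈ ({x, y} : Finset (ZMod (2 * n))) := hxyeq ▸ (edgeAt_mem m v).2
  rcases Finset.mem_insert.1 hv with rfl | hv'
  · exact ⟨y, fun h => hxy h.symm, hxyeq⟩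
  · rw [Finset.mem_singleton] at hv'
    subst hv'
    exact ⟨x, fun h => hxy h, by rw [hxyeq, Finset.pair_comm]⟩

noncomputable def partner (m : PMatching n) (v : ZMod (2 * n)) : ZMod (2 * n) :=
  (exists_partner m v).choose

lemma partner_ne (m : PMatching n) (v : ZMod (2 * n)) : partner m v ≠ v :=
  (exists_partner m v).choose_spec.1

lemma edgeAt_eq (m : PMatching n) (v : ZMod (2 * n)) : edgeAt m v = {v, partner m v} :=
  (exists_partner m v).choose_spec.2

lemma partner_invol (m : PMatching n) (v : ZMod (2 * n)) : partner m (partner m v) = v := by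
  set w := partner m v with hw
  have h1 : w ∈ edgeAt m v := by
    rw [edgeAt_eq]
    exact Finset.mem_insert_of_mem (Finset.mem_singleton_self _)
  have h2 : edgeAt m v = edgeAt m w := edgeAt_unique (edgeAt_mem m v).1 h1
  have h3 : partner m w ∈ edgeAt m w := by
    rw [edgeAt_eq m w]
    exact Finset.mem_insert_of_mem (Finset.mem_singleton_self _)
  rw [← h2, edgeAt_eq m v] at h3
  rcases Finset.mem_insert.1 h3 with h | h
  · exact h
  · rw [Finset.mem_singleton] at h
    exact absurd h (partner_ne m w)

lemma pair_right_eq {α : Type*} [DecidableEq α] {x a b : α} (hax : a ≠ x) (hbx : b ≠ x)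
    (h : ({x, a} : Finset α) = {x, b}) : a = b := by
  have : a ∈ ({x, b} : Finset α) := h ▸ Finset.mem_insert_of_mem (Finset.mem_singleton_self _)
  rcases Finset.mem_insert.1 this with h' | h'
  · exact absurd h' hax
  · rwa [Finset.mem_singleton] at h'

lemma partner_eq_of_edge {m : PMatching n} {x y : ZMod (2 * n)} (hxy : x ≠ y)
    (he : ({x, y} : Finset (ZMod (2 * n))) ∈ m.1) : partner m x = y := by
  have h1 : ({x, y} : Finset (ZMod (2 * n))) = edgeAt m x :=
    edgeAt_unique he (Finset.mem_insert_self _ _)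
  rw [edgeAt_eq m x] at h1
  exact (pair_right_eq (partner_ne m x) (fun h => hxy h.symm) h1.symm)

lemma mem_of_partner {m : PMatching n} {x : ZMod (2 * n)} :
    ({x, partner m x} : Finset (ZMod (2 * n))) ∈ m.1 := by
  rw [← edgeAt_eq m x]
  exact (edgeAt_mem m x).1

lemma partner_inj_aux (m m' : PMatching n) (h : ∀ v, partner m v = partner m' v) :
    ∀ e ∈ m.1, e ∈ m'.1 := by
  intro e he
  obtain ⟨x, y, hxy, rfl⟩ := Finset.card_eq_two.1 (m.2.1 e he)
  have h2 : partner m x = y := partner_eq_of_edge hxy he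
  have h3 : ({x, partner m' x} : Finset (ZMod (2 * n))) ∈ m'.1 := mem_of_partner
  rwa [← h x, h2] at h3

lemma partner_inj {m m' : PMatching n} (h : ∀ v, partner m v = partner m' v) : m = m' := by
  apply Subtype.ext
  ext e
  exact ⟨fun he => partner_inj_aux m m' h e he,
    fun he => partner_inj_aux m' m (fun v => (h v).symm) e he⟩

lemma edgeAt_smul {g : G n} {m : PMatching n} (hm : g • m = m) (v : ZMod (2 * n)) :
    edgeAt m (g • v) = (edgeAt m v).image (g • ·) := by
  symm
  apply edgeAt_unique
  · have h1 : m.1 = (g • m).1 := by rw [hm]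
    rw [h1, smul_pm_def]
    exact Finset.mem_image_of_mem _ (edgeAt_mem m v).1
  · exact Finset.mem_image_of_mem _ (edgeAt_mem m v).2

lemma partner_smul {g : G n} {m : PMatching n} (hm : g • m = m) (v : ZMod (2 * n)) :
    partner m (g • v) = g • partner m v := by
  have h1 : partner m (g • v) ∈ edgeAt m (g • v) := by
    rw [edgeAt_eq]
    exact Finset.mem_insert_of_mem (Finset.mem_singleton_self _)
  rw [edgeAt_smul hm, edgeAt_eq m v, Finset.image_insert, Finset.image_singleton] at h1
  rcases Finset.mem_insert.1 h1 with h | h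
  · exact absurd h (partner_ne m (g • v))
  · rwa [Finset.mem_singleton] at h

lemma fixcnt_le_piSet (hn : 0 < n) (g : G n) :
    Nat.card {m : PMatching n // g • m = m}
      ≤ Nat.card (PiSet (fun v : ZMod (2 * n) => g • v)) := by
  haveI : NeZero (2 * n) := ⟨by omega⟩
  apply Nat.card_le_card_of_injective
    (fun m : {m : PMatching n // g • m = m} =>
      (⟨partner m.1, fun v => partner_invol m.1 v, fun v => partner_smul m.2 v⟩ :
        PiSet (fun v : ZMod (2 * n) => g • v)))
  intro m m' hmm
  have := congrArg Subtype.val hmm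
  exact Subtype.ext (partner_inj (congrFun this))

/-- bound for the count of matchings fixed by an element of prime order -/
noncomputable def BND (n : ℕ) : ℕ :=
  2 ^ (2 * n) * 2 ^ (2 * n) * (2 * n) ^ ((2 * n + 2) / 4) + (2 * n) ^ (2 * n / 3)

lemma two_torsion_elts [NeZero (2 * n)] (z : ZMod (2 * n)) (hz : z + z = 0) :
    z = 0 ∨ z = (n : ZMod (2 * n)) := by
  have hn : 0 < n := by
    have h2 := NeZero.ne (2 * n)
    omega
  have hv : (z + z).val = 0 := by rw [hz, ZMod.val_zero]
  rw [ZMod.val_add] at hv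
  have hdvd : (2 * n) ∣ (z.val + z.val) := Nat.dvd_of_mod_eq_zero hv
  obtain ⟨k, hk⟩ := hdvd
  have hlt : z.val < 2 * n := ZMod.val_lt z
  have hk2 : k ≤ 1 := by nlinarith
  interval_cases k
  · left
    have : z.val = 0 := by omega
    exact (ZMod.val_eq_zero _).1 this
  · right
    have hzn : z.val = n := by omega
    have h1 : z = ((z.val : ℕ) : ZMod (2 * n)) := (ZMod.natCast_rightInverse z).symm
    rw [h1, hzn]

lemma card_filter_two_torsion [NeZero (2 * n)] (c : ZMod (2 * n)) :
    (univ.filter (fun x : ZMod (2 * n) => x + x = c)).card ≤ 2 := by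
  rcases Finset.eq_empty_or_nonempty (univ.filter (fun x : ZMod (2 * n) => x + x = c)) with
    he | hne
  · rw [he]; simp
  · obtain ⟨x₀, hx₀⟩ := hne
    have hx₀' : x₀ + x₀ = c := (Finset.mem_filter.1 hx₀).2
    have hinto : ∀ x ∈ univ.filter (fun x : ZMod (2 * n) => x + x = c),
        x - x₀ ∈ ({0, (n : ZMod (2 * n))} : Finset (ZMod (2 * n))) := by
      intro x hx
      have hx' : x + x = c := (Finset.mem_filter.1 hx).2
      have hz : (x - x₀) + (x - x₀) = 0 := by
        have : (x + x) - (x₀ + x₀) = 0 := by rw [hx', hx₀', sub_self]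
        linear_combination this
      rcases two_torsion_elts _ hz with h | h
      · rw [h]; exact Finset.mem_insert_self _ _
      · rw [h]; exact Finset.mem_insert_of_mem (Finset.mem_singleton_self _)
    calc (univ.filter (fun x : ZMod (2 * n) => x + x = c)).card
        ≤ ({0, (n : ZMod (2 * n))} : Finset (ZMod (2 * n))).card := by
          apply Finset.card_le_card_of_injOn _ hinto
          intro a _ b _ hab
          have := congrArg (· + x₀) hab
          simpa using this
      _ ≤ 2 := Finset.card_insert_le _ _ |>.trans (by simp)

lemma fixcnt_prime_le (hn : 0 < n) (h : G n) (hne : h ≠ 1)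
    (hp : ∃ p : ℕ, p.Prime ∧ orderOf h = p) :
    Nat.card {m : PMatching n // h • m = m} ≤ BND n := by
  haveI : NeZero (2 * n) := ⟨by omega⟩
  obtain ⟨p, hprime, hord⟩ := hp
  have hcardV : Fintype.card (ZMod (2 * n)) = 2 * n := ZMod.card _
  have hV1 : 1 ≤ Fintype.card (ZMod (2 * n)) := by omega
  rcases h with i | i
  · -- rotation
    have hfuneq : (fun v : ZMod (2 * n) => (DihedralGroup.r i) • v) = (fun v => v + i) :=
      funext fun v => r_smul i v
    have hstep : Nat.card {m : PMatching n // (DihedralGroup.r i) • m = m}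
        ≤ Nat.card (PiSet (fun v : ZMod (2 * n) => v + i)) := by
      have := fixcnt_le_piSet hn (DihedralGroup.r i)
      rwa [hfuneq] at this
    by_cases hp2 : p = 2
    · -- order-two rotation: translation by the half-point
      have hii : i + i = 0 := by
        have hpow := pow_orderOf_eq_one (DihedralGroup.r i)
        rw [hord, hp2, pow_two, DihedralGroup.r_mul_r] at hpow
        rw [DihedralGroup.one_def] at hpow
        injection hpow
      have hine : i ≠ 0 := by
        intro h0
        apply hne
        rw [h0, ← DihedralGroup.one_def]
      have hbound := card_piSet_invol (σ := fun v : ZMod (2 * n) => v + i)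
        (ι := ZMod.val) hV1
        (fun v => by show v + i + i = v; rw [add_assoc, hii, add_zero])
        (ZMod.val_injective (2 * n))
        (by
          have : (univ.filter (fun x : ZMod (2 * n) => x + i = x)) = ∅ := by
            apply Finset.filter_eq_empty_iff.2
            intro x _
            intro hx
            apply hine
            have : x + i = x + 0 := by rw [hx, add_zero]
            exact add_left_cancel this
          rw [this]
          simp)
      rw [hcardV] at hbound
      calc Nat.card {m : PMatching n // (DihedralGroup.r i) • m = m}
          ≤ 2 ^ (2 * n) * 2 ^ (2 * n) * (2 * n) ^ ((2 * n + 2) / 4) :=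
            hstep.trans hbound
        _ ≤ BND n := Nat.le_add_right _ _
    · -- odd prime rotation
      have hp3 : 3 ≤ p := by
        rcases hprime.eq_two_or_odd' with h2 | hodd
        · exact absurd h2 hp2
        · have := hprime.two_le
          rcases Nat.lt_or_ge p 3 with h3 | h3
          · interval_cases p
            · exact absurd rfl hp2
          · exact h3
      set d := Nat.gcd (2 * n) i.val with hd
      have hord' : orderOf (DihedralGroup.r i) = (2 * n) / d := DihedralGroup.orderOf_r i
      have hdpos : 0 < d := Nat.gcd_pos_of_pos_left _ (by omega)
      have hddvd : d ∣ 2 * n := Nat.gcd_dvd_left _ _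
      have hdp : d * p = 2 * n := by
        rw [← hord, hord']
        exact Nat.mul_div_cancel' hddvd
      have hdle : d ≤ 2 * n / 3 := by
        rw [Nat.le_div_iff_mul_le (by norm_num)]
        nlinarith
      have hgen : ∃ k : ℕ, (k : ZMod (2 * n)) * i = (d : ZMod (2 * n)) := by
        have hbez := Nat.gcd_eq_gcd_ab (2 * n) i.val
        have hcast : ((Nat.gcd (2 * n) i.val : ℕ) : ZMod (2 * n))
            = (i.val : ZMod (2 * n)) * ((Nat.gcdB (2 * n) i.val : ℤ) : ZMod (2 * n)) := by
          have h1 := congrArg (fun z : ℤ => (z : ZMod (2 * n))) hbez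
          have h0 : ((2 * n : ℕ) : ZMod (2 * n)) = 0 := ZMod.natCast_self _
          push_cast at h1 h0
          rw [h1, h0]
          ring
        refine ⟨((Nat.gcdB (2 * n) i.val : ℤ) : ZMod (2 * n)).val, ?_⟩
        have h1 : ((((Nat.gcdB (2 * n) i.val : ℤ) : ZMod (2 * n)).val : ℕ) : ZMod (2 * n))
            = ((Nat.gcdB (2 * n) i.val : ℤ) : ZMod (2 * n)) := ZMod.natCast_rightInverse _
        have hival : ((i.val : ℕ) : ZMod (2 * n)) = i := ZMod.natCast_rightInverse i
        rw [h1, hd, hcast, hival]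
        ring
      have hbound := card_piSet_rot hn i d hdpos hgen
      calc Nat.card {m : PMatching n // (DihedralGroup.r i) • m = m}
          ≤ (2 * n) ^ d := hstep.trans hbound
        _ ≤ (2 * n) ^ (2 * n / 3) := Nat.pow_le_pow_right (by omega) hdle
        _ ≤ BND n := Nat.le_add_left _ _
  · -- reflection
    have hfuneq : (fun v : ZMod (2 * n) => (DihedralGroup.sr i) • v) = (fun v => -v - i) :=
      funext fun v => sr_smul i v
    have hstep : Nat.card {m : PMatching n // (DihedralGroup.sr i) • m = m}
        ≤ Nat.card (PiSet (fun v : ZMod (2 * n) => -v - i)) := by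
      have := fixcnt_le_piSet hn (DihedralGroup.sr i)
      rwa [hfuneq] at this
    have hbound := card_piSet_invol (σ := fun v : ZMod (2 * n) => -v - i)
      (ι := ZMod.val) hV1
      (fun v => by show -(-v - i) - i = v; ring)
      (ZMod.val_injective (2 * n))
      (by
        have hsub : (univ.filter (fun x : ZMod (2 * n) => -x - i = x))
            ⊆ (univ.filter (fun x : ZMod (2 * n) => x + x = -i)) := by
          intro x hx
          have hx' := (Finset.mem_filter.1 hx).2
          refine Finset.mem_filter.2 ⟨Finset.mem_univ _, ?_⟩
          linear_combination -hx'
        exact (Finset.card_le_card hsub).trans (card_filter_two_torsion (-i)))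
    rw [hcardV] at hbound
    calc Nat.card {m : PMatching n // (DihedralGroup.sr i) • m = m}
        ≤ 2 ^ (2 * n) * 2 ^ (2 * n) * (2 * n) ^ ((2 * n + 2) / 4) := hstep.trans hbound
      _ ≤ BND n := Nat.le_add_right _ _

end DihAux

namespace DihAux

open Finset

variable {n : ℕ}

lemma smul_pow_fix {g : G n} {m : PMatching n} (hm : g • m = m) (k : ℕ) : g ^ k • m = m := by
  induction k with
  | zero => simpa using (one_smul (G n) m)
  | succ k ih => rw [pow_succ, mul_smul, hm, ih]

lemma NFix_le (hn : 0 < n) : NFix n ≤ 4 * n * BND n := by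
  classical
  haveI : NeZero (2 * n) := ⟨by omega⟩
  haveI : Finite (PMatching n) := finite_pm hn
  haveI : Fintype (PMatching n) := Fintype.ofFinite _
  have hper : ∀ g : G n, g ≠ 1 →
      (univ.filter (fun m : PMatching n => g • m = m)).card ≤ BND n := by
    intro g hg
    have hordpos : orderOf g ≠ 0 := (orderOf_pos g).ne'
    have hord1 : orderOf g ≠ 1 := by simpa [orderOf_eq_one_iff] using hg
    set p := (orderOf g).minFac with hp
    have hprime : p.Prime := Nat.minFac_prime hord1
    have hdvd : p ∣ orderOf g := Nat.minFac_dvd _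
    set h := g ^ (orderOf g / p) with hh
    have hordh : orderOf h = p := orderOf_pow_orderOf_div hordpos hdvd
    have hne1 : h ≠ 1 := by
      intro e
      rw [e, orderOf_one] at hordh
      exact hprime.one_lt.ne' hordh.symm
    have hsub : (univ.filter (fun m : PMatching n => g • m = m))
        ⊆ (univ.filter (fun m : PMatching n => h • m = m)) := by
      intro m hm
      have := (Finset.mem_filter.1 hm).2
      exact Finset.mem_filter.2 ⟨Finset.mem_univ _, smul_pow_fix this _⟩
    have hcard : (univ.filter (fun m : PMatching n => h • m = m)).card
        = Nat.card {m : PMatching n // h • m = m} := by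
      rw [Nat.card_eq_fintype_card, Fintype.card_subtype]
    calc (univ.filter (fun m : PMatching n => g • m = m)).card
        ≤ (univ.filter (fun m : PMatching n => h • m = m)).card := Finset.card_le_card hsub
      _ = Nat.card {m : PMatching n // h • m = m} := hcard
      _ ≤ BND n := fixcnt_prime_le hn h hne1 ⟨p, hprime, hordh⟩
  have hNfix : NFix n
      = (univ.filter (fun m : PMatching n => ∃ g : G n, g ≠ 1 ∧ g • m = m)).card := by
    rw [NFix, Nat.card_eq_fintype_card, Fintype.card_subtype]
  rw [hNfix]
  have hsub : (univ.filter (fun m : PMatching n => ∃ g : G n, g ≠ 1 ∧ g • m = m))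
      ⊆ (Finset.univ.erase (1 : G n)).biUnion
          (fun g => univ.filter (fun m : PMatching n => g • m = m)) := by
    intro m hm
    obtain ⟨g, hg1, hgm⟩ := (Finset.mem_filter.1 hm).2
    exact Finset.mem_biUnion.2 ⟨g, Finset.mem_erase.2 ⟨hg1, Finset.mem_univ _⟩,
      Finset.mem_filter.2 ⟨Finset.mem_univ _, hgm⟩⟩
  calc (univ.filter (fun m : PMatching n => ∃ g : G n, g ≠ 1 ∧ g • m = m)).card
      ≤ ((Finset.univ.erase (1 : G n)).biUnion
          (fun g => univ.filter (fun m : PMatching n => g • m = m))).card :=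
        Finset.card_le_card hsub
    _ ≤ ∑ g ∈ Finset.univ.erase (1 : G n),
          (univ.filter (fun m : PMatching n => g • m = m)).card := Finset.card_biUnion_le
    _ ≤ ∑ _g ∈ Finset.univ.erase (1 : G n), BND n :=
        Finset.sum_le_sum (fun g hg => hper g (Finset.mem_erase.1 hg).1)
    _ = (Finset.univ.erase (1 : G n)).card * BND n := by rw [Finset.sum_const, smul_eq_mul]
    _ ≤ (4 * n) * BND n := by
        apply Nat.mul_le_mul_right
        calc (Finset.univ.erase (1 : G n)).card
            ≤ (Finset.univ : Finset (G n)).card := Finset.card_le_card (Finset.erase_subset _ _)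
          _ = Fintype.card (G n) := Finset.card_univ
          _ = 4 * n := by rw [DihedralGroup.card]; ring

lemma card_pmatching (hn : 0 < n) :
    Nat.card (PMatching n) = ∏ j ∈ Finset.range n, (2 * j + 1) := by
  classical
  haveI : NeZero (2 * n) := ⟨by omega⟩
  haveI : Finite (PMatching n) := finite_pm hn
  rw [← card_pmF n (s := (univ : Finset (ZMod (2 * n)))) (by rw [Finset.card_univ, ZMod.card])]
  rw [← Nat.card_eq_finsetCard]
  apply Nat.card_congr
  refine Equiv.ofBijective (fun m => ⟨m.1, mem_pmF.2 ⟨?_, ?_⟩⟩) ⟨?_, ?_⟩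
  · exact fun e he => ⟨Finset.subset_univ _, m.2.1 e he⟩
  · exact fun v _ => m.2.2 v
  · intro m m' h
    have h2 := congrArg (fun x : {M // M ∈ pmF (univ : Finset (ZMod (2 * n)))} => x.val) h
    simp only at h2
    exact Subtype.ext h2
  · rintro ⟨M, hM⟩
    have h := mem_pmF.1 hM
    exact ⟨⟨M, fun e he => (h.1 e he).2, fun v => h.2 v (Finset.mem_univ v)⟩, rfl⟩

end DihAux

namespace DihAux

open Finset

lemma choose_le_two_pow' {m j : ℕ} (hj : j ≤ m) : m.choose j ≤ 2 ^ m := by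
  calc m.choose j ≤ ∑ i ∈ Finset.range (m + 1), m.choose i :=
        Finset.single_le_sum (fun i _ => Nat.zero_le _) (Finset.mem_range.2 (by omega))
    _ = 2 ^ m := Nat.sum_range_choose m

lemma kappa_term_le {m k : ℕ} (hk : 2 * k ≤ m) :
    m ! / (k ! * (m - 2 * k)!) ≤ 2 ^ m * 2 ^ m * m ^ (m / 2) := by
  have h1 := Nat.choose_mul_factorial_mul_factorial hk
  have h2 := Nat.choose_mul_factorial_mul_factorial (show k ≤ 2 * k by omega)
  have h2' : (2 * k).choose k * k ! * k ! = (2 * k)! := by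
    have : 2 * k - k = k := by omega
    rwa [this] at h2
  have hid : m ! = (k ! * (m - 2 * k)!) * (m.choose (2 * k) * ((2 * k).choose k * k !)) := by
    rw [← h1, ← h2']
    ring
  have hpos : 0 < k ! * (m - 2 * k)! := Nat.mul_pos (Nat.factorial_pos _) (Nat.factorial_pos _)
  have hdiv : m ! / (k ! * (m - 2 * k)!) = m.choose (2 * k) * ((2 * k).choose k * k !) := by
    rw [hid]
    exact Nat.mul_div_cancel_left _ hpos
  rw [hdiv]
  have b1 : m.choose (2 * k) ≤ 2 ^ m := choose_le_two_pow' hk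
  have b2 : (2 * k).choose k ≤ 2 ^ m := by
    calc (2 * k).choose k ≤ 2 ^ (2 * k) := choose_le_two_pow' (by omega)
      _ ≤ 2 ^ m := Nat.pow_le_pow_right (by norm_num) hk
  have b3 : k ! ≤ m ^ (m / 2) := by
    calc k ! ≤ k ^ k := Nat.factorial_le_pow k
      _ ≤ m ^ k := Nat.pow_le_pow_left (by omega) k
      _ ≤ m ^ (m / 2) := by
          rcases Nat.eq_zero_or_pos m with rfl | hm
        
          · have : k = 0 := by omega
            simp [this]
          · exact Nat.pow_le_pow_right hm (by omega)
  calc m.choose (2 * k) * ((2 * k).choose k * k !)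
      ≤ 2 ^ m * (2 ^ m * m ^ (m / 2)) := Nat.mul_le_mul b1 (Nat.mul_le_mul b2 b3)
    _ = 2 ^ m * 2 ^ m * m ^ (m / 2) := by ring

lemma kappa_le (m : ℕ) : kappa m ≤ (m / 2 + 1) * (2 ^ m * 2 ^ m * m ^ (m / 2)) := by
  rw [kappa]
  calc ∑ k ∈ Finset.range (m / 2 + 1), m ! / (k ! * (m - 2 * k)!)
      ≤ ∑ _k ∈ Finset.range (m / 2 + 1), 2 ^ m * 2 ^ m * m ^ (m / 2) :=
        Finset.sum_le_sum (fun k hk => kappa_term_le (by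
          have := Finset.mem_range.1 hk
          omega))
    _ = (m / 2 + 1) * (2 ^ m * 2 ^ m * m ^ (m / 2)) := by
        rw [Finset.sum_const, Finset.card_range, smul_eq_mul]

lemma prod_lower (n : ℕ) : (n / 2) ^ (n - n / 4) ≤ ∏ j ∈ Finset.range n, (2 * j + 1) := by
  have h1 : (n / 2) ^ (n - n / 4) ≤ ∏ j ∈ Finset.Ico (n / 4) n, (2 * j + 1) := by
    have hcard : (Finset.Ico (n / 4) n).card = n - n / 4 := by
      rw [Nat.card_Ico]
    rw [← hcard]
    apply Finset.pow_card_le_prod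
    intro j hj
    have := (Finset.mem_Ico.1 hj).1
    omega
  refine h1.trans (Finset.prod_le_prod_of_subset_of_one_le' ?_ ?_)
  · intro j hj
    rw [Finset.mem_range]
    exact (Finset.mem_Ico.1 hj).2
  · intro j _ _
    omega

lemma two_pow_absorb {q j : ℕ} (hq : 2 ^ 99 ≤ q) : 2 ^ j ≤ q ^ (j / 99 + 1) := by
  calc 2 ^ j ≤ 2 ^ (99 * (j / 99 + 1)) := Nat.pow_le_pow_right (by norm_num) (by omega)
    _ = (2 ^ 99) ^ (j / 99 + 1) := by rw [← pow_mul]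
    _ ≤ q ^ (j / 99 + 1) := Nat.pow_le_pow_left hq _

lemma master1 {n : ℕ} (hn : 2 ^ 100 ≤ n) :
    16 * n ^ 3 * BND n ≤ ∏ j ∈ Finset.range n, (2 * j + 1) := by
  have hq99 : 2 ^ 99 ≤ n / 2 := by omega
  set q := n / 2 with hq
  have hq432 : 432 ≤ q := by
    calc 432 ≤ 2 ^ 99 := by norm_num
      _ ≤ q := hq99
  have hq1 : 1 ≤ q := by omega
  have hn3 : n ≤ 3 * q := by omega
  have h2n : 2 * n ≤ 8 * q := by omega
  have h16 : 16 * n ^ 3 ≤ q ^ 4 := by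
    calc 16 * n ^ 3 ≤ 16 * (3 * q) ^ 3 := by
          exact Nat.mul_le_mul_left _ (Nat.pow_le_pow_left hn3 3)
      _ = 432 * q ^ 3 := by ring
      _ ≤ q * q ^ 3 := Nat.mul_le_mul_right _ hq432
      _ = q ^ 4 := by ring
  have hpow2n : ∀ e : ℕ, (2 * n) ^ e ≤ 2 ^ (3 * e) * q ^ e := by
    intro e
    calc (2 * n) ^ e ≤ (8 * q) ^ e := Nat.pow_le_pow_left h2n e
      _ = 8 ^ e * q ^ e := by rw [mul_pow]
      _ = 2 ^ (3 * e) * q ^ e := by rw [pow_mul]; norm_num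
  -- first summand
  set e1 := (2 * n + 2) / 4 with he1
  set e2 := 2 * n / 3 with he2
  set C := n - n / 4 - 1 with hC
  have ht1 : 16 * n ^ 3 * (2 ^ (2 * n) * 2 ^ (2 * n) * (2 * n) ^ e1) ≤ q ^ C := by
    calc 16 * n ^ 3 * (2 ^ (2 * n) * 2 ^ (2 * n) * (2 * n) ^ e1)
        ≤ q ^ 4 * (2 ^ (2 * n) * 2 ^ (2 * n) * ((2 ^ (3 * e1)) * q ^ e1)) :=
          Nat.mul_le_mul h16 (Nat.mul_le_mul le_rfl (hpow2n e1))
      _ = q ^ 4 * (2 ^ (4 * n + 3 * e1) * q ^ e1) := by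
          rw [show 4 * n + 3 * e1 = (2 * n + 2 * n) + 3 * e1 by ring, pow_add, pow_add]
          ring
      _ ≤ q ^ 4 * (q ^ ((4 * n + 3 * e1) / 99 + 1) * q ^ e1) :=
          Nat.mul_le_mul le_rfl (Nat.mul_le_mul (two_pow_absorb hq99) le_rfl)
      _ = q ^ (4 + (((4 * n + 3 * e1) / 99 + 1) + e1)) := by
          rw [← pow_add, ← pow_add]
      _ ≤ q ^ C := Nat.pow_le_pow_right hq1 (by rw [hC, he1]; omega)
  have ht2 : 16 * n ^ 3 * (2 * n) ^ e2 ≤ q ^ C := by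
    calc 16 * n ^ 3 * (2 * n) ^ e2
        ≤ q ^ 4 * ((2 ^ (3 * e2)) * q ^ e2) := Nat.mul_le_mul h16 (hpow2n e2)
      _ ≤ q ^ 4 * (q ^ (3 * e2 / 99 + 1) * q ^ e2) :=
          Nat.mul_le_mul le_rfl (Nat.mul_le_mul (two_pow_absorb hq99) le_rfl)
      _ = q ^ (4 + ((3 * e2 / 99 + 1) + e2)) := by
          rw [← pow_add, ← pow_add]
      _ ≤ q ^ C := Nat.pow_le_pow_right hq1 (by rw [hC, he2]; omega)
  calc 16 * n ^ 3 * BND n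
      = 16 * n ^ 3 * (2 ^ (2 * n) * 2 ^ (2 * n) * (2 * n) ^ e1)
        + 16 * n ^ 3 * (2 * n) ^ e2 := by
        rw [BND, mul_add]
    _ ≤ q ^ C + q ^ C := Nat.add_le_add ht1 ht2
    _ = 2 * q ^ C := by ring
    _ ≤ q * q ^ C := Nat.mul_le_mul_right _ (by omega)
    _ = q ^ (C + 1) := by rw [pow_succ]; ring
    _ ≤ q ^ (n - n / 4) := Nat.pow_le_pow_right hq1 (by omega)
    _ ≤ ∏ j ∈ Finset.range n, (2 * j + 1) := prod_lower n

lemma master2 {n : ℕ} (hn : 2 ^ 100 ≤ n) :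
    n ^ 3 * (kappa (n - 1) + kappa n) ≤ ∏ j ∈ Finset.range n, (2 * j + 1) := by
  have hq99 : 2 ^ 99 ≤ n / 2 := by omega
  set q := n / 2 with hq
  have hq1 : 1 ≤ q := by omega
  have hn3 : n ≤ 3 * q := by omega
  have hkap : ∀ m : ℕ, m ≤ n → kappa m ≤ n * (2 ^ n * 2 ^ n * n ^ (n / 2)) := by
    intro m hm
    refine (kappa_le m).trans ?_
    have h1 : m / 2 + 1 ≤ n := by omega
    have h2 : (2 : ℕ) ^ m ≤ 2 ^ n := Nat.pow_le_pow_right (by norm_num) hm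
    have h3 : m ^ (m / 2) ≤ n ^ (n / 2) := by
      calc m ^ (m / 2) ≤ n ^ (m / 2) := Nat.pow_le_pow_left hm _
        _ ≤ n ^ (n / 2) := Nat.pow_le_pow_right (by omega) (by omega)
    exact Nat.mul_le_mul h1 (Nat.mul_le_mul (Nat.mul_le_mul h2 h2) h3)
  have hsum : kappa (n - 1) + kappa n ≤ 2 * (n * (2 ^ n * 2 ^ n * n ^ (n / 2))) := by
    have ha := hkap (n - 1) (by omega)
    have hb := hkap n le_rfl
    omega
  have hbig : n ^ 3 * (2 * (n * (2 ^ n * 2 ^ n * n ^ (n / 2))))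
      ≤ q ^ ((2 * n + 1 + (2 * 4 + 2 * (n / 2))) / 99 + 1 + (4 + n / 2)) := by
    have h1 : n ^ 3 * (2 * (n * (2 ^ n * 2 ^ n * n ^ (n / 2))))
        = 2 * 2 ^ n * 2 ^ n * n ^ 4 * n ^ (n / 2) := by ring
    rw [h1]
    have h2 : 2 * 2 ^ n * 2 ^ n = 2 ^ (2 * n + 1) := by
      rw [show 2 * n + 1 = n + n + 1 by ring, pow_add, pow_add, pow_one]
      ring
    have h3 : n ^ 4 ≤ (3 * q) ^ 4 := Nat.pow_le_pow_left hn3 4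
    have h4 : n ^ (n / 2) ≤ (3 * q) ^ (n / 2) := Nat.pow_le_pow_left hn3 _
    have h5 : ∀ e : ℕ, (3 * q) ^ e = 3 ^ e * q ^ e := fun e => mul_pow _ _ _
    have h6 : ∀ e : ℕ, (3 : ℕ) ^ e ≤ 2 ^ (2 * e) := by
      intro e
      calc (3 : ℕ) ^ e ≤ 4 ^ e := Nat.pow_le_pow_left (by norm_num) e
        _ = 2 ^ (2 * e) := by rw [pow_mul]; norm_num
    calc 2 * 2 ^ n * 2 ^ n * n ^ 4 * n ^ (n / 2)
        ≤ 2 ^ (2 * n + 1) * (3 * q) ^ 4 * (3 * q) ^ (n / 2) := by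
          rw [h2]
          exact Nat.mul_le_mul (Nat.mul_le_mul le_rfl h3) h4
      _ = 2 ^ (2 * n + 1) * (3 ^ 4 * 3 ^ (n / 2)) * (q ^ 4 * q ^ (n / 2)) := by
          rw [h5, h5]
          ring
      _ ≤ 2 ^ (2 * n + 1) * (2 ^ (2 * 4) * 2 ^ (2 * (n / 2))) * (q ^ 4 * q ^ (n / 2)) := by
          exact Nat.mul_le_mul (Nat.mul_le_mul le_rfl (Nat.mul_le_mul (h6 4) (h6 _))) le_rfl
      _ = 2 ^ (2 * n + 1 + (2 * 4 + 2 * (n / 2))) * (q ^ 4 * q ^ (n / 2)) := by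
          rw [pow_add, pow_add]
          ring
      _ ≤ q ^ ((2 * n + 1 + (2 * 4 + 2 * (n / 2))) / 99 + 1) * (q ^ 4 * q ^ (n / 2)) :=
          Nat.mul_le_mul (two_pow_absorb hq99) le_rfl
      _ = q ^ ((2 * n + 1 + (2 * 4 + 2 * (n / 2))) / 99 + 1 + (4 + n / 2)) := by
          rw [← pow_add, ← pow_add]
  calc n ^ 3 * (kappa (n - 1) + kappa n)
      ≤ n ^ 3 * (2 * (n * (2 ^ n * 2 ^ n * n ^ (n / 2)))) := Nat.mul_le_mul le_rfl hsum
    _ ≤ q ^ ((2 * n + 1 + (2 * 4 + 2 * (n / 2))) / 99 + 1 + (4 + n / 2)) := hbig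
    _ ≤ q ^ (n - n / 4) := Nat.pow_le_pow_right hq1 (by omega)
    _ ≤ ∏ j ∈ Finset.range n, (2 * j + 1) := prod_lower n

end DihAux

end AuxAll

/-- Corollary 2: `d_n ∼ (2n−1)!!/(4n)` as `n → ∞`, i.e. `4n·d_n/(2n−1)!! → 1`; in
particular `n·(κ_{n−1}+κ_n) = o((2n−1)!!)`. -/
theorem dihOrbitCount_asymptotic :
    Filter.Tendsto
      (fun n : ℕ => (4 * n * dihOrbitCount n : ℝ) / ∏ j ∈ Finset.range n, (2 * j + 1 : ℝ))
      Filter.atTop (nhds 1) ∧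
    Filter.Tendsto
      (fun n : ℕ =>
        (n * (kappa (n - 1) + kappa n) : ℝ) / ∏ j ∈ Finset.range n, (2 * j + 1 : ℝ))
      Filter.atTop (nhds 0) := by
  have hPpos : ∀ n : ℕ, 0 < ∏ j ∈ Finset.range n, (2 * j + 1) :=
    fun n => Finset.prod_pos (fun j _ => by omega)
  have hPcast : ∀ n : ℕ, (∏ j ∈ Finset.range n, (2 * j + 1 : ℝ))
      = ((∏ j ∈ Finset.range n, (2 * j + 1) : ℕ) : ℝ) := by
    intro n
    push_cast
    rfl
  have hPposR : ∀ n : ℕ, (0:ℝ) < ∏ j ∈ Finset.range n, (2 * j + 1 : ℝ) := by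
    intro n
    rw [hPcast n]
    exact_mod_cast hPpos n
  have hone : Filter.Tendsto (fun n : ℕ => 1 + 1/(n:ℝ)) Filter.atTop (nhds 1) := by
    have h1 : Filter.Tendsto (fun _ : ℕ => (1:ℝ)) Filter.atTop (nhds 1) := tendsto_const_nhds
    have h2 := h1.add tendsto_one_div_atTop_nhds_zero_nat
    simpa using h2
  constructor
  · refine tendsto_of_tendsto_of_tendsto_of_le_of_le'
      (tendsto_const_nhds : Filter.Tendsto (fun _ : ℕ => (1:ℝ)) Filter.atTop (nhds 1))
      hone ?_ ?_
    · -- eventual lower bound 1 ≤ f n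
      filter_upwards [Filter.eventually_ge_atTop (2^100 : ℕ)] with n hn
      have hn0 : 0 < n := by omega
      have hlow := (DihAux.orbit_bounds hn0).1
      rw [DihAux.card_pmatching hn0] at hlow
      rw [le_div_iff₀ (hPposR n), one_mul, hPcast n]
      exact_mod_cast hlow
    · -- eventual upper bound f n ≤ 1 + 1/n
      filter_upwards [Filter.eventually_ge_atTop (2^100 : ℕ)] with n hn
      have hn0 : 0 < n := by omega
      have hup := (DihAux.orbit_bounds hn0).2
      rw [DihAux.card_pmatching hn0] at hup
      have hNF := DihAux.NFix_le hn0
      have hm1 := DihAux.master1 hn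
      set Pn := ∏ j ∈ Finset.range n, (2 * j + 1) with hPn
      have key : 4 * n * dihOrbitCount n * n ≤ Pn * n + Pn := by
        have h1 : 4 * n * DihAux.NFix n * n ≤ 16 * n ^ 3 * DihAux.BND n := by
          calc 4 * n * DihAux.NFix n * n ≤ 4 * n * (4 * n * DihAux.BND n) * n := by
                apply Nat.mul_le_mul_right
                exact Nat.mul_le_mul_left _ hNF
            _ = 16 * n ^ 3 * DihAux.BND n := by ring
        calc 4 * n * dihOrbitCount n * n ≤ (Pn + 4 * n * DihAux.NFix n) * n :=
              Nat.mul_le_mul_right _ hup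
          _ = Pn * n + 4 * n * DihAux.NFix n * n := by ring
          _ ≤ Pn * n + 16 * n ^ 3 * DihAux.BND n := by omega
          _ ≤ Pn * n + Pn := by omega
      have hnR : (0:ℝ) < (n:ℝ) := by exact_mod_cast hn0
      rw [div_le_iff₀ (hPposR n)]
      have hr : (4 * (n:ℝ) * (dihOrbitCount n : ℝ)) * n
          ≤ (1 + 1/(n:ℝ)) * (∏ j ∈ Finset.range n, (2 * j + 1 : ℝ)) * n := by
        have hc : ((4 * n * dihOrbitCount n * n : ℕ) : ℝ) ≤ ((Pn * n + Pn : ℕ) : ℝ) := by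
          exact_mod_cast key
        push_cast at hc
        calc (4 * (n:ℝ) * (dihOrbitCount n : ℝ)) * n ≤ (Pn : ℝ) * n + Pn := hc
          _ = (1 + 1/(n:ℝ)) * ((Pn : ℕ) : ℝ) * n := by
              field_simp
          _ = (1 + 1/(n:ℝ)) * (∏ j ∈ Finset.range n, (2 * j + 1 : ℝ)) * n := by
              rw [hPcast n]
      exact le_of_mul_le_mul_right hr hnR
  · refine tendsto_of_tendsto_of_tendsto_of_le_of_le'
      (tendsto_const_nhds : Filter.Tendsto (fun _ : ℕ => (0:ℝ)) Filter.atTop (nhds 0))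
      tendsto_one_div_atTop_nhds_zero_nat ?_ ?_
    · filter_upwards [Filter.eventually_ge_atTop (1 : ℕ)] with n hn
      positivity
    · filter_upwards [Filter.eventually_ge_atTop (2^100 : ℕ)] with n hn
      have hn0 : 0 < n := by omega
      have hm2 := DihAux.master2 hn
      set Pn := ∏ j ∈ Finset.range n, (2 * j + 1) with hPn
      have key : n * (kappa (n - 1) + kappa n) * n ≤ Pn := by
        calc n * (kappa (n - 1) + kappa n) * n ≤ n ^ 3 * (kappa (n - 1) + kappa n) := by
              have h2 : n * n ≤ n ^ 3 := by nlinarith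
              calc n * (kappa (n - 1) + kappa n) * n
                  = (n * n) * (kappa (n - 1) + kappa n) := by ring
                _ ≤ n ^ 3 * (kappa (n - 1) + kappa n) := Nat.mul_le_mul_right _ h2
          _ ≤ Pn := hm2
      have hnR : (0:ℝ) < (n:ℝ) := by exact_mod_cast hn0
      rw [div_le_div_iff₀ (hPposR n) hnR]
      have hc : ((n * (kappa (n - 1) + kappa n) * n : ℕ) : ℝ) ≤ ((Pn : ℕ) : ℝ) := by
        exact_mod_cast key
      push_cast at hc
      calc ((n : ℝ) * ((kappa (n-1) : ℝ) + (kappa n : ℝ))) * n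
          ≤ ((Pn : ℕ) : ℝ) := hc
        _ = 1 * (∏ j ∈ Finset.range n, (2 * j + 1 : ℝ)) := by rw [hPcast n, one_mul]
end
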